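/- arXiv:1912.00054 — 3 statements merged into one kernel-verified Lean document; each statement's English description precedes it below -/
import Mathlib

section
/- There exist constants M > 0 and 0 < λ < min_{1≤j≤n} (4 R_j(T))^{−1} such that for every j = 1,…,n, |∂²u/∂x_j²(t,x)| ≤ M (R_j(T) − R_j(t))^{−1} exp(λ|x|²) for all (t,x) ∈ [t₀,T) × ℝⁿ. -/
/-!
Write `σᵢ = Rᵢ(T) − Rᵢ(t) > 0` and `mᵢ = ∫ₜᵀ rᵢ`. Up to a term independent of `x` and the
factor `exp (−∫ₜᵀ A₁) ≤ exp (C_A (T − t₀))`, `u(t, x)` is the integral of `g` against the product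
of heat kernels `G_{σᵢ}(xᵢ − mᵢ − yᵢ)`. The heat kernel and its first two derivatives are
bounded by multiples of `exp (−z²/(4σ))`, which after a shift of size at most one is bounded by a
multiple of `exp (−z²/(8σ))`; together with `λ′ < 1/(16σ)` this dominates the integrand, so we may
differentiate twice in `xⱼ` under the integral. Then `|G_σ''| ≤ (3/σ) (2πσ)^(−1/2) exp (−z²/(4σ))`
and the growth bound `|g y| ≤ c′ ∏ exp (λ′yᵢ²)` split the integral into one-dimensional Gaussian
integrals, each at most `2 exp (2λ′(xᵢ − mᵢ)²)` (times `3/σⱼ` for `i = j`). Finally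
`|x − m|² ≤ 2|x|² + 2|m|²` turns `2λ′` into `λ = 4λ′ < 1/(4Rⱼ(T))`.
-/

open Real MeasureTheory

theorem two_mul_le_exp (w : ℝ) : 2 * w ≤ exp w := by
  rcases le_or_gt w 0 with hw | hw
  · linarith [exp_pos w]
  · nlinarith [quadratic_le_exp_of_nonneg hw.le, sq_nonneg (w - 1)]

theorem sq_mul_exp_neg_sq_div_le {q : ℝ} (hq : 0 < q) (z : ℝ) :
    z ^ 2 * exp (-z ^ 2 / q) ≤ q / 2 := by
  have h := two_mul_le_exp (z ^ 2 / q)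
  rw [neg_div, exp_neg, ← div_eq_mul_inv, div_le_iff₀ (exp_pos _)]
  rw [← le_div_iff₀' two_pos] at h
  calc z ^ 2 = q * (z ^ 2 / q) := by field_simp
    _ ≤ q * (exp (z ^ 2 / q) / 2) := by gcongr
    _ = q / 2 * exp (z ^ 2 / q) := by ring

theorem exp_neg_sq_div_two_mul (s z : ℝ) :
    exp (-z ^ 2 / (2 * s)) = exp (-z ^ 2 / (4 * s)) * exp (-z ^ 2 / (4 * s)) := by
  rw [← exp_add]; ring_nf

theorem exp_neg_sq_div_le_of_abs_sub_le {s z z₀ : ℝ} (hs : 0 < s) (h : |z - z₀| ≤ 1) :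
    exp (-z ^ 2 / (4 * s)) ≤ exp (4 * s)⁻¹ * exp (-z₀ ^ 2 / (8 * s)) := by
  rw [← exp_add, exp_le_exp, ← sub_nonneg]
  have hz : z₀ ^ 2 ≤ 2 * z ^ 2 + 2 := by
    have hd : (z - z₀) ^ 2 ≤ 1 := by nlinarith [sq_abs (z - z₀), abs_nonneg (z - z₀)]
    nlinarith [sq_nonneg (2 * z - z₀)]
  have : (4 * s)⁻¹ + -z₀ ^ 2 / (8 * s) - -z ^ 2 / (4 * s) = (2 * z ^ 2 + 2 - z₀ ^ 2) / (8 * s) := by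
    field_simp; ring
  rw [this]
  exact div_nonneg (by linarith) (by positivity)

theorem exp_mul_sq_mul_exp_le {l : ℝ} (hl : 0 ≤ l) (q m v : ℝ) :
    exp (l * v ^ 2) * exp (-(m - v) ^ 2 / q) ≤
      exp (2 * l * m ^ 2) * exp (-(q⁻¹ - 2 * l) * (v - m) ^ 2) := by
  rw [← exp_add, ← exp_add, exp_le_exp]
  have : v ^ 2 ≤ 2 * (v - m) ^ 2 + 2 * m ^ 2 := by nlinarith [sq_nonneg (v - 2 * m)]
  have hq' : -(m - v) ^ 2 / q = -q⁻¹ * (v - m) ^ 2 := by ring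
  rw [hq']
  nlinarith [mul_le_mul_of_nonneg_left this hl]

theorem integrable_exp_mul_sq_mul_exp {l q : ℝ} (hl : 0 ≤ l) (h : 2 * l < q⁻¹)
    (m : ℝ) : Integrable (fun v => exp (l * v ^ 2) * exp (-(m - v) ^ 2 / q)) := by
  refine Integrable.mono' (((integrable_exp_neg_mul_sq (sub_pos.2 h)).comp_sub_right m).const_mul
    (exp (2 * l * m ^ 2))) (by fun_prop) (Filter.Eventually.of_forall fun v => ?_)
  rw [Real.norm_of_nonneg (by positivity)]
  exact exp_mul_sq_mul_exp_le hl q m v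

theorem integral_exp_mul_sq_mul_exp_le {l q : ℝ} (hl : 0 ≤ l) (h : 2 * l < q⁻¹)
    (m : ℝ) : ∫ v, exp (l * v ^ 2) * exp (-(m - v) ^ 2 / q) ≤
      exp (2 * l * m ^ 2) * √(π / (q⁻¹ - 2 * l)) := by
  have hG := ((integrable_exp_neg_mul_sq (sub_pos.2 h)).comp_sub_right m).const_mul
    (exp (2 * l * m ^ 2))
  calc ∫ v, exp (l * v ^ 2) * exp (-(m - v) ^ 2 / q)
      ≤ ∫ v, exp (2 * l * m ^ 2) * exp (-(q⁻¹ - 2 * l) * (v - m) ^ 2) :=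
        integral_mono (integrable_exp_mul_sq_mul_exp hl h m) hG
          (exp_mul_sq_mul_exp_le hl q m)
    _ = exp (2 * l * m ^ 2) * √(π / (q⁻¹ - 2 * l)) := by
        rw [integral_const_mul,
          integral_sub_right_eq_self (fun v => exp (-(q⁻¹ - 2 * l) * v ^ 2)) m, integral_gaussian]

theorem two_mul_lt_inv_of_lt_inv {l s a : ℝ} (hs : 0 < s) (ha : 0 < a) (ha8 : a ≤ 8)
    (hl : l < (16 * s)⁻¹) : 2 * l < (a * s)⁻¹ :=
  calc 2 * l < (8 * s)⁻¹ := by rw [show (8 * s)⁻¹ = 2 * (16 * s)⁻¹ by ring]; linarith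
    _ ≤ (a * s)⁻¹ := inv_anti₀ (by positivity) (by nlinarith)

theorem integrable_exp_mul_sq_mul_abs {k : ℝ → ℝ} (hk : Continuous k) {l q K a : ℝ} (hl : 0 ≤ l)
    (h : 2 * l < q⁻¹) (hkb : ∀ v, |k v| ≤ K * exp (-(a - v) ^ 2 / q)) :
    Integrable fun v => exp (l * v ^ 2) * |k v| :=
  ((integrable_exp_mul_sq_mul_exp hl h a).const_mul K).mono' (by fun_prop)
    (Filter.Eventually.of_forall fun v => by
      rw [norm_of_nonneg (by positivity), mul_left_comm]
      exact mul_le_mul_of_nonneg_left (hkb v) (exp_pos _).le)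

theorem integral_exp_mul_sq_mul_abs_le {k : ℝ → ℝ} (hk : Continuous k) {l s K a : ℝ} (hs : 0 < s)
    (hl : 0 ≤ l) (hls : l < (16 * s)⁻¹) (hkb : ∀ v, |k v| ≤ K * exp (-(a - v) ^ 2 / (4 * s))) :
    ∫ v, exp (l * v ^ 2) * |k v| ≤ K * √(8 * π * s) * exp (2 * l * a ^ 2) := by
  have hK : 0 ≤ K := nonneg_of_mul_nonneg_left ((abs_nonneg _).trans (hkb 0)) (exp_pos _)
  have h := two_mul_lt_inv_of_lt_inv hs four_pos (by norm_num) hls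
  have h8 : (8 * s)⁻¹ ≤ (4 * s)⁻¹ - 2 * l := by
    have := two_mul_lt_inv_of_lt_inv hs (by norm_num : (0 : ℝ) < 8) le_rfl hls
    rw [show (4 * s)⁻¹ = 2 * (8 * s)⁻¹ by ring]; linarith
  calc ∫ v, exp (l * v ^ 2) * |k v|
      ≤ ∫ v, K * (exp (l * v ^ 2) * exp (-(a - v) ^ 2 / (4 * s))) :=
        integral_mono (integrable_exp_mul_sq_mul_abs hk hl h hkb)
          ((integrable_exp_mul_sq_mul_exp hl h a).const_mul K) fun v => by
            rw [mul_left_comm]; exact mul_le_mul_of_nonneg_left (hkb v) (exp_pos _).le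
    _ ≤ K * (exp (2 * l * a ^ 2) * √(π / ((4 * s)⁻¹ - 2 * l))) := by
        rw [integral_const_mul]; gcongr; exact integral_exp_mul_sq_mul_exp_le hl h a
    _ ≤ K * (exp (2 * l * a ^ 2) * √(8 * π * s)) := by
        gcongr
        calc π / ((4 * s)⁻¹ - 2 * l) ≤ π / (8 * s)⁻¹ := by gcongr
          _ = 8 * π * s := by field_simp
    _ = K * √(8 * π * s) * exp (2 * l * a ^ 2) := by ring

noncomputable def heatKernel (s z : ℝ) : ℝ := (2 * π * s) ^ (-(1 : ℝ) / 2) * exp (-z ^ 2 / (2 * s))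

namespace heatKernel

variable {s : ℝ}

theorem hasDerivAt (hs : s ≠ 0) (z : ℝ) :
    HasDerivAt (heatKernel s) (-(z / s) * heatKernel s z) z := by
  have h : HasDerivAt (fun z => -z ^ 2 / (2 * s)) (-(z / s)) z :=
    ((hasDerivAt_pow 2 z).neg.div_const (2 * s)).congr_deriv (by field_simp; ring)
  exact (h.exp.const_mul ((2 * π * s) ^ (-(1 : ℝ) / 2))).congr_deriv (by rw [heatKernel]; ring)

theorem hasDerivAt_neg_div_mul (hs : s ≠ 0) (z : ℝ) :
    HasDerivAt (fun z => -(z / s) * heatKernel s z)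
      ((z ^ 2 / s ^ 2 - 1 / s) * heatKernel s z) z :=
  (((hasDerivAt_id z).div_const s).neg.mul (hasDerivAt hs z)).congr_deriv (by
    simp only [Pi.neg_apply, id]; field_simp; ring)

@[fun_prop]
theorem continuous : Continuous (heatKernel s) := by
  unfold heatKernel; fun_prop

theorem rpow_neg_half_pos (hs : 0 < s) : 0 < (2 * π * s) ^ (-(1 : ℝ) / 2) :=
  rpow_pos_of_pos (by positivity) _

theorem abs_le (hs : 0 < s) (z : ℝ) :
    |heatKernel s z| ≤ (2 * π * s) ^ (-(1 : ℝ) / 2) * exp (-z ^ 2 / (4 * s)) := by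
  have hc := rpow_neg_half_pos hs
  rw [heatKernel, abs_of_pos (by positivity)]
  gcongr _ * exp ?_
  rw [div_le_div_iff₀ (by positivity) (by positivity)]
  nlinarith [sq_nonneg z]

theorem abs_neg_div_mul_le (hs : 0 < s) (z : ℝ) :
    |-(z / s) * heatKernel s z| ≤
      (2 * π * s) ^ (-(1 : ℝ) / 2) * (√s / s) * exp (-z ^ 2 / (4 * s)) := by
  have hc := rpow_neg_half_pos hs
  have hz : |z| * exp (-z ^ 2 / (4 * s)) ≤ √s := by
    apply Real.le_sqrt_of_sq_le
    rw [mul_pow, sq_abs, sq (exp _), ← exp_neg_sq_div_two_mul]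
    exact (sq_mul_exp_neg_sq_div_le (by positivity) z).trans_eq (by ring)
  rw [heatKernel, exp_neg_sq_div_two_mul]
  set E := exp (-z ^ 2 / (4 * s))
  have hK : 0 < (2 * π * s) ^ (-(1 : ℝ) / 2) * (E * E) := by positivity
  rw [abs_mul, abs_neg, abs_div, abs_of_pos hs, abs_of_pos hK]
  calc |z| / s * ((2 * π * s) ^ (-(1 : ℝ) / 2) * (E * E))
      = (2 * π * s) ^ (-(1 : ℝ) / 2) / s * (|z| * E) * E := by ring
    _ ≤ (2 * π * s) ^ (-(1 : ℝ) / 2) / s * √s * E := by gcongr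
    _ = _ := by ring

theorem abs_deriv2_le (hs : 0 < s) (z : ℝ) :
    |(z ^ 2 / s ^ 2 - 1 / s) * heatKernel s z| ≤
      (2 * π * s) ^ (-(1 : ℝ) / 2) * (3 / s) * exp (-z ^ 2 / (4 * s)) := by
  have hc := rpow_neg_half_pos hs
  have hp : |z ^ 2 / s ^ 2 - 1 / s| ≤ z ^ 2 / s ^ 2 + 1 / s :=
    (abs_sub _ _).trans (by rw [abs_of_nonneg (by positivity), abs_of_nonneg (by positivity)])
  rw [heatKernel, exp_neg_sq_div_two_mul]
  set E := exp (-z ^ 2 / (4 * s))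
  have hK : 0 < (2 * π * s) ^ (-(1 : ℝ) / 2) * (E * E) := by positivity
  have hz : z ^ 2 * E ≤ 4 * s / 2 := sq_mul_exp_neg_sq_div_le (by positivity) z
  have hE : E ≤ 1 := exp_le_one_iff.2 (by rw [neg_div]; exact neg_nonpos.2 (by positivity))
  rw [abs_mul, abs_of_pos hK]
  calc |z ^ 2 / s ^ 2 - 1 / s| * ((2 * π * s) ^ (-(1 : ℝ) / 2) * (E * E))
      ≤ (z ^ 2 / s ^ 2 + 1 / s) * ((2 * π * s) ^ (-(1 : ℝ) / 2) * (E * E)) := by gcongr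
    _ = (2 * π * s) ^ (-(1 : ℝ) / 2) / s ^ 2 * (z ^ 2 * E + s * E) * E := by
        field_simp
    _ ≤ (2 * π * s) ^ (-(1 : ℝ) / 2) / s ^ 2 * (4 * s / 2 + s * 1) * E := by gcongr
    _ = _ := by field_simp; ring

theorem rpow_neg_half_mul_sqrt (hs : 0 < s) :
    (2 * π * s) ^ (-(1 : ℝ) / 2) * √(8 * π * s) = 2 := by
  have h : 0 < √(2 * π * s) := sqrt_pos.2 (by positivity)
  rw [show 8 * π * s = 2 ^ 2 * (2 * π * s) by ring, sqrt_mul (by positivity), sqrt_sq two_pos.le,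
    show -(1 : ℝ) / 2 = -(1 / 2) by ring, rpow_neg (by positivity), ← sqrt_eq_rpow]
  field_simp

end heatKernel

theorem integrable_exp_mul_sq_mul_abs_heatKernel {l s : ℝ} (hs : 0 < s) (hl : 0 ≤ l)
    (hls : l < (16 * s)⁻¹) (a : ℝ) :
    Integrable fun v => exp (l * v ^ 2) * |heatKernel s (a - v)| :=
  integrable_exp_mul_sq_mul_abs (by fun_prop) hl
    (two_mul_lt_inv_of_lt_inv hs four_pos (by norm_num) hls)
    fun v => heatKernel.abs_le hs _

section ProductKernel

variable {ι : Type*} [Fintype ι]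

theorem prod_apply_update [DecidableEq ι] (f : ι → ℝ → ℝ) (x : ι → ℝ) (j : ι) (ξ : ℝ) :
    ∏ i, f i (Function.update x j ξ i) = f j ξ * ∏ i ∈ Finset.univ \ {j}, f i (x i) := by
  simp only [Function.apply_update f, Finset.prod_update_of_mem (Finset.mem_univ j)]

theorem prod_update_apply [DecidableEq ι] (k : ι → ℝ → ℝ) (j : ι) (K : ℝ → ℝ) (y : ι → ℝ) :
    ∏ i, Function.update k j K i (y i) = K (y j) * ∏ i ∈ Finset.univ \ {j}, k i (y i) := by
  simp only [Function.apply_update (fun i (φ : ℝ → ℝ) => φ (y i)),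
    Finset.prod_update_of_mem (Finset.mem_univ j)]

variable {g : (ι → ℝ) → ℝ} {c l : ℝ} {k : ι → ℝ → ℝ}

theorem abs_mul_prod_le (hgb : ∀ y, |g y| ≤ c * exp (l * ∑ i, y i ^ 2)) (y : ι → ℝ) :
    |g y * ∏ i, k i (y i)| ≤ c * ∏ i, exp (l * y i ^ 2) * |k i (y i)| := by
  rw [abs_mul, Finset.abs_prod, Finset.prod_mul_distrib, ← exp_sum, ← Finset.mul_sum, ← mul_assoc]
  exact mul_le_mul_of_nonneg_right (hgb y) (by positivity)

theorem integrable_mul_prod (hg : Continuous g) (hgb : ∀ y, |g y| ≤ c * exp (l * ∑ i, y i ^ 2))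
    (hk : ∀ i, Continuous (k i)) (hint : ∀ i, Integrable fun v => exp (l * v ^ 2) * |k i v|) :
    Integrable fun y : ι → ℝ => g y * ∏ i, k i (y i) :=
  ((Integrable.fintype_prod (𝕜 := ℝ) hint).const_mul c).mono'
    (hg.mul (continuous_finsetProd _ fun i _ =>
      (hk i).comp (continuous_apply i))).aestronglyMeasurable
    (Filter.Eventually.of_forall (abs_mul_prod_le hgb))

theorem integrable_mul_prod_update [DecidableEq ι] (hg : Continuous g)
    (hgb : ∀ y, |g y| ≤ c * exp (l * ∑ i, y i ^ 2)) (hk : ∀ i, Continuous (k i))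
    (hint : ∀ i, Integrable fun v => exp (l * v ^ 2) * |k i v|) (j : ι) {K : ℝ → ℝ}
    (hK : Continuous K) (hKint : Integrable fun v => exp (l * v ^ 2) * |K v|) :
    Integrable fun y : ι → ℝ => g y * ∏ i, Function.update k j K i (y i) :=
  integrable_mul_prod hg hgb
    ((Function.forall_update_iff k fun _ φ => Continuous φ).2 ⟨hK, fun i _ => hk i⟩)
    ((Function.forall_update_iff k fun _ φ => Integrable fun v => exp (l * v ^ 2) * |φ v|).2
      ⟨hKint, fun i _ => hint i⟩)

theorem abs_integral_mul_prod_le (hgb : ∀ y, |g y| ≤ c * exp (l * ∑ i, y i ^ 2))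
    (hint : ∀ i, Integrable fun v => exp (l * v ^ 2) * |k i v|) :
    |∫ y : ι → ℝ, g y * ∏ i, k i (y i)| ≤ c * ∏ i, ∫ v, exp (l * v ^ 2) * |k i v| := by
  calc |∫ y : ι → ℝ, g y * ∏ i, k i (y i)|
      ≤ ∫ y : ι → ℝ, c * ∏ i, exp (l * y i ^ 2) * |k i (y i)| := by
        rw [← Real.norm_eq_abs]
        exact norm_integral_le_of_norm_le ((Integrable.fintype_prod (𝕜 := ℝ) hint).const_mul c)
          (Filter.Eventually.of_forall (abs_mul_prod_le hgb))
    _ = c * ∏ i, ∫ v, exp (l * v ^ 2) * |k i v| := by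
        rw [integral_const_mul]
        exact congrArg _
          (integral_fintype_prod_eq_prod (𝕜 := ℝ) fun i v => exp (l * v ^ 2) * |k i v|)

end ProductKernel

theorem abs_mul_comp_sub_le {q : ℝ → ℝ} {Q s : ℝ} (hs : 0 < s)
    (hq : ∀ z, |q z| ≤ Q * exp (-z ^ 2 / (4 * s))) {ξ ξ₀ : ℝ} (hξ : |ξ - ξ₀| ≤ 1) (w z : ℝ) :
    |w * q (ξ - z)| ≤ Q * exp (4 * s)⁻¹ * |w * exp (-(ξ₀ - z) ^ 2 / (8 * s))| := by
  have hQ : 0 ≤ Q := nonneg_of_mul_nonneg_left ((abs_nonneg _).trans (hq 0)) (exp_pos _)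
  have hshift := exp_neg_sq_div_le_of_abs_sub_le hs
    (show |(ξ - z) - (ξ₀ - z)| ≤ 1 by rwa [sub_sub_sub_cancel_right])
  rw [abs_mul, abs_mul, abs_of_pos (exp_pos _)]
  calc |w| * |q (ξ - z)| ≤ |w| * (Q * exp (-(ξ - z) ^ 2 / (4 * s))) := by gcongr; exact hq _
    _ ≤ |w| * (Q * (exp (4 * s)⁻¹ * exp (-(ξ₀ - z) ^ 2 / (8 * s)))) := by gcongr
    _ = _ := by ring

theorem hasDerivAt_integral_mul_comp_sub {α : Type*} [MeasurableSpace α] {μ : Measure α}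
    {W p : α → ℝ} (hW : AEStronglyMeasurable W μ) (hp : Measurable p) {s : ℝ} (hs : 0 < s)
    {k k' : ℝ → ℝ} (hk : ∀ z, HasDerivAt k (k' z) z) (hk' : Continuous k') {K K' : ℝ}
    (hkb : ∀ z, |k z| ≤ K * exp (-z ^ 2 / (4 * s)))
    (hk'b : ∀ z, |k' z| ≤ K' * exp (-z ^ 2 / (4 * s))) {ξ₀ : ℝ}
    (hint : Integrable (fun y => W y * exp (-(ξ₀ - p y) ^ 2 / (8 * s))) μ) :
    HasDerivAt (fun ξ => ∫ y, W y * k (ξ - p y) ∂μ) (∫ y, W y * k' (ξ₀ - p y) ∂μ) ξ₀ := by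
  have hkc : Continuous k := continuous_iff_continuousAt.2 fun z => (hk z).continuousAt
  have hmeas : ∀ q : ℝ → ℝ, Continuous q → ∀ ξ,
      AEStronglyMeasurable (fun y => W y * q (ξ - p y)) μ := fun q hq ξ =>
    hW.mul (hq.measurable.comp (measurable_const.sub hp)).aestronglyMeasurable
  have hdom : ∀ {q : ℝ → ℝ} {Q : ℝ}, (∀ z, |q z| ≤ Q * exp (-z ^ 2 / (4 * s))) →
      ∀ y, ∀ ξ ∈ Metric.ball ξ₀ 1,
        ‖W y * q (ξ - p y)‖ ≤ Q * exp (4 * s)⁻¹ * ‖W y * exp (-(ξ₀ - p y) ^ 2 / (8 * s))‖ :=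
    fun hq y ξ hξ => abs_mul_comp_sub_le hs hq (Metric.mem_ball.1 hξ).le _ _
  refine (hasDerivAt_integral_of_dominated_loc_of_deriv_le (Metric.ball_mem_nhds ξ₀ one_pos)
    (Filter.Eventually.of_forall (hmeas k hkc))
    ((hint.norm.const_mul _).mono' (hmeas k hkc ξ₀) (Filter.Eventually.of_forall fun y =>
      hdom hkb y ξ₀ (Metric.mem_ball_self one_pos)))
    (hmeas k' hk' ξ₀) (Filter.Eventually.of_forall (hdom hk'b)) (hint.norm.const_mul _)
    (Filter.Eventually.of_forall fun y ξ _ => ?_)).2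
  exact (((hk (ξ - p y)).comp ξ ((hasDerivAt_id ξ).sub_const (p y))).const_mul (W y)).congr_deriv
    (by simp)

section HeatIntegral

variable {ι : Type*} [Fintype ι] [DecidableEq ι] {g : (ι → ℝ) → ℝ} {c l : ℝ} {s : ι → ℝ}

theorem deriv_deriv_integral_mul_prod_heatKernel (hg : Continuous g) (hl : 0 ≤ l)
    (hgb : ∀ y, |g y| ≤ c * exp (l * ∑ i, y i ^ 2)) (hs : ∀ i, 0 < s i)
    (hls : ∀ i, l < (16 * s i)⁻¹) (x m : ι → ℝ) (j : ι) :
    deriv (deriv fun ξ => ∫ y, g y * ∏ i, heatKernel (s i) (Function.update x j ξ i - m i - y i))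
        (x j) =
      ∫ y, g y * ∏ i, Function.update (fun i v => heatKernel (s i) (x i - m i - v)) j
        (fun v => ((x j - m j - v) ^ 2 / s j ^ 2 - 1 / s j) * heatKernel (s j) (x j - m j - v))
        i (y i) := by
  set κ : ι → ℝ → ℝ := fun i v => heatKernel (s i) (x i - m i - v)
  set W : (ι → ℝ) → ℝ := fun y => g y * ∏ i ∈ Finset.univ \ {j}, κ i (y i)
  have hκ : ∀ i, Continuous (κ i) := fun i => by fun_prop
  have hW : Continuous W :=
    hg.mul (continuous_finsetProd _ fun i _ => (hκ i).comp (continuous_apply i))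
  have hWK : ∀ (K : ℝ → ℝ) y, g y * ∏ i, Function.update κ j K i (y i) = W y * K (y j) :=
    fun K y => by rw [prod_update_apply]; ring
  have hweight : ∀ ξ, Integrable fun y => W y * exp (-(ξ - (m j + y j)) ^ 2 / (8 * s j)) := by
    intro ξ
    simp_rw [← sub_sub, ← hWK (fun v => exp (-(ξ - m j - v) ^ 2 / (8 * s j)))]
    exact integrable_mul_prod_update hg hgb hκ
      (fun i => integrable_exp_mul_sq_mul_abs_heatKernel (hs i) hl (hls i) _) j (by fun_prop)
      (integrable_exp_mul_sq_mul_abs (by fun_prop) hl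
        (two_mul_lt_inv_of_lt_inv (hs j) (by norm_num) le_rfl (hls j))
        fun v => by rw [one_mul, abs_of_pos (exp_pos _)])
  have hp : Measurable fun y : ι → ℝ => m j + y j := measurable_const.add (measurable_pi_apply j)
  have h1 : ∀ ξ, HasDerivAt (fun ξ => ∫ y, W y * heatKernel (s j) (ξ - (m j + y j)))
      (∫ y, W y * (-((ξ - (m j + y j)) / s j) * heatKernel (s j) (ξ - (m j + y j)))) ξ :=
    fun ξ => hasDerivAt_integral_mul_comp_sub hW.aestronglyMeasurable hp (hs j)
      (heatKernel.hasDerivAt (hs j).ne') (by fun_prop) (heatKernel.abs_le (hs j))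
      (heatKernel.abs_neg_div_mul_le (hs j)) (hweight ξ)
  have h2 := hasDerivAt_integral_mul_comp_sub hW.aestronglyMeasurable hp (hs j)
    (heatKernel.hasDerivAt_neg_div_mul (hs j).ne') (by fun_prop)
    (heatKernel.abs_neg_div_mul_le (hs j)) (heatKernel.abs_deriv2_le (hs j)) (hweight (x j))
  have hF : (fun ξ => ∫ y, g y * ∏ i, heatKernel (s i) (Function.update x j ξ i - m i - y i)) =
      fun ξ => ∫ y, W y * heatKernel (s j) (ξ - (m j + y j)) := by
    funext ξ
    congr 1
    funext y
    rw [prod_apply_update (fun i v => heatKernel (s i) (v - m i - y i)), sub_sub]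
    ring
  rw [hF, funext fun ξ => (h1 ξ).deriv, h2.deriv]
  simp_rw [hWK, sub_sub]

theorem abs_integral_mul_prod_update_heatKernel_le (hl : 0 ≤ l)
    (hgb : ∀ y, |g y| ≤ c * exp (l * ∑ i, y i ^ 2)) (hs : ∀ i, 0 < s i)
    (hls : ∀ i, l < (16 * s i)⁻¹) (x m : ι → ℝ) (j : ι) :
    |∫ y, g y * ∏ i, Function.update (fun i v => heatKernel (s i) (x i - m i - v)) j
        (fun v => ((x j - m j - v) ^ 2 / s j ^ 2 - 1 / s j) * heatKernel (s j) (x j - m j - v))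
        i (y i)| ≤
      3 * 2 ^ Fintype.card ι * c / s j * exp (2 * l * ∑ i, (x i - m i) ^ 2) := by
  set κ := Function.update (fun i v => heatKernel (s i) (x i - m i - v)) j
    (fun v => ((x j - m j - v) ^ 2 / s j ^ 2 - 1 / s j) * heatKernel (s j) (x j - m j - v))
  have hc : 0 ≤ c := nonneg_of_mul_nonneg_left ((abs_nonneg _).trans (hgb 0)) (exp_pos _)
  have hκ : ∀ i, (Integrable fun v => exp (l * v ^ 2) * |κ i v|) ∧
      ∫ v, exp (l * v ^ 2) * |κ i v| ≤
        (if i = j then 3 / s j else 1) * (2 * exp (2 * l * (x i - m i) ^ 2)) := by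
    intro i
    rcases eq_or_ne i j with rfl | hij
    · have hb := fun v => heatKernel.abs_deriv2_le (hs i) (x i - m i - v)
      simp only [κ, Function.update_self, if_true]
      refine ⟨integrable_exp_mul_sq_mul_abs (by fun_prop) hl
          (two_mul_lt_inv_of_lt_inv (hs i) four_pos (by norm_num) (hls i)) hb,
        (integral_exp_mul_sq_mul_abs_le (by fun_prop) (hs i) hl (hls i) hb).trans_eq ?_⟩
      rw [mul_right_comm _ (3 / s i), heatKernel.rpow_neg_half_mul_sqrt (hs i)]
      ring
    · simp only [κ, Function.update_of_ne hij, if_neg hij, one_mul]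
      refine ⟨integrable_exp_mul_sq_mul_abs_heatKernel (hs i) hl (hls i) _,
        (integral_exp_mul_sq_mul_abs_le (by fun_prop) (hs i) hl (hls i)
          fun v => heatKernel.abs_le (hs i) _).trans_eq ?_⟩
      rw [heatKernel.rpow_neg_half_mul_sqrt (hs i)]
  calc |∫ y, g y * ∏ i, κ i (y i)|
      ≤ c * ∏ i, ∫ v, exp (l * v ^ 2) * |κ i v| :=
        abs_integral_mul_prod_le hgb fun i => (hκ i).1
    _ ≤ c * ∏ i, (if i = j then 3 / s j else 1) * (2 * exp (2 * l * (x i - m i) ^ 2)) := by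
        gcongr with i
        exact (hκ i).2
    _ = 3 * 2 ^ Fintype.card ι * c / s j * exp (2 * l * ∑ i, (x i - m i) ^ 2) := by
        rw [Finset.prod_mul_distrib, Finset.prod_ite_eq', if_pos (Finset.mem_univ j),
          Finset.prod_mul_distrib, Finset.prod_const, ← exp_sum, ← Finset.mul_sum,
          Finset.card_univ]
        ring

theorem abs_deriv_deriv_integral_mul_prod_heatKernel_le (hg : Continuous g) (hl : 0 ≤ l)
    (hgb : ∀ y, |g y| ≤ c * exp (l * ∑ i, y i ^ 2)) (hs : ∀ i, 0 < s i)
    (hls : ∀ i, l < (16 * s i)⁻¹) (x m : ι → ℝ) (j : ι) :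
    |deriv (deriv fun ξ => ∫ y, g y * ∏ i, heatKernel (s i) (Function.update x j ξ i - m i - y i))
        (x j)| ≤ 3 * 2 ^ Fintype.card ι * c / s j * exp (2 * l * ∑ i, (x i - m i) ^ 2) := by
  rw [deriv_deriv_integral_mul_prod_heatKernel hg hl hgb hs hls]
  exact abs_integral_mul_prod_update_heatKernel_le hl hgb hs hls x m j

end HeatIntegral

theorem abs_intervalIntegral_le_mul {f : ℝ → ℝ} {a b t C : ℝ} (hat : a ≤ t) (htb : t ≤ b)
    (hf : ∀ s ∈ Set.Icc a b, |f s| ≤ C) : |∫ s in t..b, f s| ≤ C * (b - a) := by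
  have hC : 0 ≤ C := (abs_nonneg _).trans (hf t ⟨hat, htb⟩)
  have hI : ∀ s ∈ Set.uIoc t b, |f s| ≤ C := fun s hs => by
    rw [Set.uIoc_of_le htb] at hs
    exact hf s ⟨hat.trans hs.1.le, hs.2⟩
  calc |∫ s in t..b, f s| ≤ C * |b - t| :=
        intervalIntegral.norm_integral_le_of_norm_le_const (f := f) hI
    _ ≤ C * (b - a) := by rw [abs_of_nonneg (sub_nonneg.2 htb)]; gcongr

theorem sum_sub_sq_le {ι : Type*} [Fintype ι] (x : ι → ℝ) {m : ι → ℝ} {B : ℝ}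
    (hm : ∀ i, |m i| ≤ B) :
    ∑ i, (x i - m i) ^ 2 ≤ 2 * ∑ i, x i ^ 2 + 2 * Fintype.card ι * B ^ 2 := by
  calc ∑ i, (x i - m i) ^ 2 ≤ ∑ i, (2 * x i ^ 2 + 2 * B ^ 2) := Finset.sum_le_sum fun i _ => by
        have : m i ^ 2 ≤ B ^ 2 := sq_le_sq' (abs_le.1 (hm i)).1 (abs_le.1 (hm i)).2
        nlinarith [sq_nonneg (x i + m i)]
    _ = 2 * ∑ i, x i ^ 2 + 2 * Fintype.card ι * B ^ 2 := by
        rw [Finset.sum_add_distrib, ← Finset.mul_sum, Finset.sum_const, Finset.card_univ,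
          nsmul_eq_mul]
        ring

theorem feynman_kac_second_derivative_bound_general
    (n : ℕ) (t₀ T : ℝ)
    (R : Fin n → ℝ → ℝ)
    (hRnonneg : ∀ j, ∀ t ∈ Set.Icc t₀ T, 0 ≤ R j t)
    (hRmono : ∀ j, StrictMonoOn (R j) (Set.Icc t₀ T))
    (r : Fin n → ℝ → ℝ) (A₁ f : ℝ → ℝ)
    (Cr CA : ℝ) (hrB : ∀ j, ∀ t ∈ Set.Icc t₀ T, |r j t| ≤ Cr)
    (hA₁B : ∀ t ∈ Set.Icc t₀ T, |A₁ t| ≤ CA)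
    (g : (Fin n → ℝ) → ℝ) (hg : Continuous g)
    (c' lam' : ℝ) (hc' : 0 < c') (hlam' : 0 < lam')
    (hlam'' : ∀ j, lam' < (16 * R j T)⁻¹)
    (hgrowth : ∀ x : Fin n → ℝ, |g x| ≤ c' * Real.exp (lam' * ∑ j, (x j) ^ 2))
    (u : ℝ → (Fin n → ℝ) → ℝ)
    (hu : ∀ t : ℝ, t₀ ≤ t → t < T → ∀ x : Fin n → ℝ,
      u t x = -(∫ s in t..T, Real.exp (∫ ρ in s..t, A₁ ρ) * f s)
        + Real.exp (-(∫ s in t..T, A₁ s)) *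
          ∫ y : Fin n → ℝ, g y *
            ∏ j, (2 * Real.pi * (R j T - R j t)) ^ (-(1 : ℝ) / 2) *
              Real.exp (-(x j - (∫ s in t..T, r j s) - y j) ^ 2
                / (2 * (R j T - R j t)))) :
    ∃ M lam : ℝ, 0 < M ∧ 0 < lam ∧ (∀ j, lam < (4 * R j T)⁻¹) ∧
      ∀ j, ∀ t : ℝ, t₀ ≤ t → t < T → ∀ x : Fin n → ℝ,
        |deriv (deriv (fun ξ => u t (Function.update x j ξ))) (x j)|
          ≤ M * (R j T - R j t)⁻¹ * Real.exp (lam * ∑ j, (x j) ^ 2) := by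
  refine ⟨3 * 2 ^ n * c' * exp (CA * (T - t₀)) * exp (4 * n * lam' * (Cr * (T - t₀)) ^ 2),
    4 * lam', by positivity, by positivity, fun j => ?_, ?_⟩
  · calc 4 * lam' < 4 * (16 * R j T)⁻¹ := by linarith [hlam'' j]
      _ = (4 * R j T)⁻¹ := by ring
  intro j t ht₀t htT x
  have ht : t ∈ Set.Icc t₀ T := ⟨ht₀t, htT.le⟩
  have hσ : ∀ i, 0 < R i T - R i t := fun i =>
    sub_pos.2 (hRmono i ht ⟨ht₀t.trans htT.le, le_rfl⟩ htT)
  have hlσ : ∀ i, lam' < (16 * (R i T - R i t))⁻¹ := fun i =>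
    (hlam'' i).trans_le (inv_anti₀ (by linarith [hσ i]) (by linarith [hRnonneg i t ht]))
  have hm : ∀ i, |∫ s in t..T, r i s| ≤ Cr * (T - t₀) := fun i =>
    abs_intervalIntegral_le_mul ht₀t htT.le (hrB i)
  have hA : exp (-∫ s in t..T, A₁ s) ≤ exp (CA * (T - t₀)) :=
    exp_le_exp.2 ((neg_le_abs _).trans (abs_intervalIntegral_le_mul ht₀t htT.le hA₁B))
  have hD := abs_deriv_deriv_integral_mul_prod_heatKernel_le hg hlam'.le hgrowth hσ hlσ x
    (fun i => ∫ s in t..T, r i s) j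
  have hx := sum_sub_sq_le x hm
  simp only [Fintype.card_fin] at hD hx
  simp only [hu t ht₀t htT]
  rw [deriv_const_add', deriv_const_mul_field', deriv_const_mul_field', abs_mul,
    abs_of_pos (exp_pos _)]
  have hσj := div_nonneg (by positivity : (0 : ℝ) ≤ 3 * 2 ^ n * c') (hσ j).le
  calc _ ≤ exp (CA * (T - t₀)) * (3 * 2 ^ n * c' / (R j T - R j t) *
        exp (2 * lam' * ∑ i, (x i - ∫ s in t..T, r i s) ^ 2)) := by
        gcongr
        exact hD
    _ ≤ exp (CA * (T - t₀)) * (3 * 2 ^ n * c' / (R j T - R j t) *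
        exp (4 * lam' * ∑ i, x i ^ 2 + 4 * n * lam' * (Cr * (T - t₀)) ^ 2)) := by
        gcongr
        linarith [mul_le_mul_of_nonneg_left hx hlam'.le]
    _ = _ := by rw [exp_add]; ring

/-- There exist `M > 0` and `0 < λ < min_j (4 R_j(T))⁻¹` such that for
every `j`, `|∂²u/∂x_j²(t,x)| ≤ M (R_j(T) − R_j(t))⁻¹ exp(λ|x|²)` for all
`(t,x) ∈ [t₀,T) × ℝⁿ`. -/
theorem feynman_kac_second_derivative_bound
    (n : ℕ) (hn : 1 ≤ n) (t₀ T : ℝ) (ht₀ : 0 ≤ t₀) (hT : t₀ < T)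
    (R : Fin n → ℝ → ℝ)
    (hRsmooth : ∀ j, ContDiffOn ℝ 1 (R j) (Set.Icc t₀ T))
    (hRnonneg : ∀ j, ∀ t ∈ Set.Icc t₀ T, 0 ≤ R j t)
    (hRmono : ∀ j, StrictMonoOn (R j) (Set.Icc t₀ T))
    (hRT : ∀ j, 0 < R j T)
    (r : Fin n → ℝ → ℝ) (A₁ f : ℝ → ℝ)
    (hr : ∀ j, ContinuousOn (r j) (Set.Icc t₀ T))
    (hA₁ : ContinuousOn A₁ (Set.Icc t₀ T)) (hf : ContinuousOn f (Set.Icc t₀ T))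
    (Cr CA Cf : ℝ) (hrB : ∀ j, ∀ t ∈ Set.Icc t₀ T, |r j t| ≤ Cr)
    (hA₁B : ∀ t ∈ Set.Icc t₀ T, |A₁ t| ≤ CA) (hfB : ∀ t ∈ Set.Icc t₀ T, |f t| ≤ Cf)
    (g : (Fin n → ℝ) → ℝ) (hg : Continuous g)
    (c' lam' : ℝ) (hc' : 0 < c') (hlam' : 0 < lam')
    (hlam'' : ∀ j, lam' < (16 * R j T)⁻¹)
    (hgrowth : ∀ x : Fin n → ℝ, |g x| ≤ c' * Real.exp (lam' * ∑ j, (x j) ^ 2))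
    (u : ℝ → (Fin n → ℝ) → ℝ)
    (hu : ∀ t : ℝ, t₀ ≤ t → t < T → ∀ x : Fin n → ℝ,
      u t x = -(∫ s in t..T, Real.exp (∫ ρ in s..t, A₁ ρ) * f s)
        + Real.exp (-(∫ s in t..T, A₁ s)) *
          ∫ y : Fin n → ℝ, g y *
            ∏ j, (2 * Real.pi * (R j T - R j t)) ^ (-(1 : ℝ) / 2) *
              Real.exp (-(x j - (∫ s in t..T, r j s) - y j) ^ 2
                / (2 * (R j T - R j t)))) :
    ∃ M lam : ℝ, 0 < M ∧ 0 < lam ∧ (∀ j, lam < (4 * R j T)⁻¹) ∧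
      ∀ j, ∀ t : ℝ, t₀ ≤ t → t < T → ∀ x : Fin n → ℝ,
        |deriv (deriv (fun ξ => u t (Function.update x j ξ))) (x j)|
          ≤ M * (R j T - R j t)⁻¹ * Real.exp (lam * ∑ j, (x j) ^ 2) :=
  feynman_kac_second_derivative_bound_general n t₀ T R hRnonneg hRmono r A₁ f Cr CA hrB hA₁B g hg c'
    lam' hc' hlam' hlam'' hgrowth u hu
end

section
/- Assume in addition that there are constants 0 < c₀ ≤ C with c₀ ≤ σ_t ≤ C for all t ∈ [0,T], that φ(r,s) ≥ 0 for all r ≠ s, and that there exist t₀ ∈ [0,T), c₁ > 0 and a ∈ (0,2) such that ∫_t^T ( ∫_s^T σ_r (∂K/∂t)(r,s) dr )² ds ≥ c₁ (T−t)^a for all t ∈ [t₀,T]. Then ∫_{t₀}^T (V(T) − V(t))^{−1/2} dt < ∞. -/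
/-!
Write `F_t(s) = ∫_s^t σ_r K'(r,s) dr`, so that `V(t) = ∫_0^t F_t(s)² ds`. For `t ≤ t'` and
`s ≤ t` we have `F_{t'}(s) = F_t(s) + G(s)` with `G(s) = ∫_t^{t'} σ_r K'(r,s) dr`, and by Fubini
`∫_0^t F_t G ds = ∫_0^t ∫_t^{t'} σ_r σ_{r'} φ(r,r') dr' dr ≥ 0`. Expanding the square therefore
gives `V(t) + ∫_t^{t'} F_{t'}(s)² ds ≤ V(t')`. Consequently `V` is nondecreasing, so
`t ↦ (V(T) - V(t))^{-1/2}` is monotone (hence measurable), and `V(T) - V(t) ≥ c₁ (T-t)^a`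
dominates it by `c₁^{-1/2} (T-t)^{-a/2}`, which is integrable since `a < 2`.
All integrability comes from (H2) and `σ ≤ C`: `∫ |σ_r K'(r,s)| dr ≲ s^{-β}` and `2β < 1`.
-/

open Real MeasureTheory intervalIntegral Set

lemma intervalIntegrable_sub_rpow {p : ℝ} (hp : -1 < p) (s a b : ℝ) :
    IntervalIntegrable (fun x => (x - s) ^ p) volume a b := by
  simpa using (intervalIntegrable_rpow' hp (a := a - s) (b := b - s)).comp_sub_right s

lemma setIntegral_Ioc_eq_of_eq_zero {f : ℝ → ℝ} {a s t : ℝ} (has : a ≤ s) (hf : ∀ r ≤ s, f r = 0) :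
    ∫ r in Ioc a t, f r = ∫ r in Ioc s t, f r :=
  setIntegral_eq_of_subset_of_forall_sdiff_eq_zero measurableSet_Ioc
    (Ioc_subset_Ioc_left has) fun r hr => hf r (not_lt.1 fun h => hr.2 ⟨h, hr.1.2⟩)

lemma intervalIntegral_congr_Ioo {f g : ℝ → ℝ} {a b : ℝ} (hab : a ≤ b) (h : EqOn f g (Ioo a b)) :
    ∫ x in a..b, f x = ∫ x in a..b, g x := by
  rw [integral_of_le hab, integral_of_le hab, integral_Ioc_eq_integral_Ioo,
    integral_Ioc_eq_integral_Ioo]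
  exact setIntegral_congr_fun measurableSet_Ioo h

lemma integrableOn_mul_of_abs_le_rpow {f g : ℝ → ℝ} {b β C : ℝ} (hβ : β < 1 / 2)
    (hf : AEStronglyMeasurable f (volume.restrict (Ioc 0 b)))
    (hg : AEStronglyMeasurable g (volume.restrict (Ioc 0 b)))
    (hfC : ∀ s ∈ Ioc 0 b, |f s| ≤ C * s ^ (-β)) (hgC : ∀ s ∈ Ioc 0 b, |g s| ≤ C * s ^ (-β)) :
    IntegrableOn (fun s => f s * g s) (Ioc 0 b) := by
  have hdom : IntegrableOn (fun s => C * C * s ^ (-β + -β)) (Ioc 0 b) :=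
    ((intervalIntegrable_rpow' (by linarith)).const_mul (C * C)).def'.mono_set
      (by simpa using Ioc_subset_uIoc)
  refine hdom.mono' (hf.mul hg) ((ae_restrict_iff' measurableSet_Ioc).2 (.of_forall fun s hs => ?_))
  calc ‖f s * g s‖ = |f s| * |g s| := by rw [Real.norm_eq_abs, abs_mul]
    _ ≤ C * s ^ (-β) * (C * s ^ (-β)) :=
      mul_le_mul (hfC s hs) (hgC s hs) (abs_nonneg _) ((abs_nonneg _).trans (hfC s hs))
    _ = C * C * s ^ (-β + -β) := by rw [rpow_add hs.1]; ring

lemma intervalIntegrable_rpow_of_antitoneOn {D : ℝ → ℝ} {t₀ T c₁ a q : ℝ} (ht₀T : t₀ ≤ T)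
    (hc₁ : 0 < c₁) (hq : q ≤ 0) (haq : -1 < a * q) (hanti : AntitoneOn D (Ioo t₀ T))
    (hD : ∀ t ∈ Ioo t₀ T, c₁ * (T - t) ^ a ≤ D t) :
    IntervalIntegrable (fun t => D t ^ q) volume t₀ T := by
  have hpos : ∀ t ∈ Ioo t₀ T, 0 < c₁ * (T - t) ^ a := fun t ht =>
    mul_pos hc₁ (rpow_pos_of_pos (sub_pos.2 ht.2) a)
  have hmono : MonotoneOn (fun t => D t ^ q) (Ioo t₀ T) := fun x hx y hy hxy =>
    rpow_le_rpow_of_nonpos ((hpos y hy).trans_le (hD y hy)) (hanti hx hy hxy) hq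
  have hdom : IntegrableOn (fun t => c₁ ^ q * (T - t) ^ (a * q)) (Ioo t₀ T) := by
    have := (intervalIntegrable_rpow' haq (a := T - t₀) (b := 0)).comp_sub_left T
    simp only [sub_sub_cancel, sub_zero] at this
    exact ((this.const_mul _).def'.mono_set (uIoc_of_le ht₀T ▸ Ioo_subset_Ioc_self))
  rw [intervalIntegrable_iff_integrableOn_Ioo_of_le ht₀T]
  refine hdom.mono'
    (aemeasurable_restrict_of_monotoneOn measurableSet_Ioo hmono).aestronglyMeasurable
    ((ae_restrict_iff' measurableSet_Ioo).2 (.of_forall fun t ht => ?_))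
  have hDt := hD t ht
  rw [Real.norm_eq_abs, abs_of_nonneg (rpow_nonneg ((hpos t ht).le.trans hDt) _),
    rpow_mul (sub_pos.2 ht.2).le, ← mul_rpow hc₁.le (rpow_nonneg (sub_pos.2 ht.2).le _)]
  exact rpow_le_rpow_of_nonpos (hpos t ht) hDt hq

-- For `k r s = σ_r ∂K/∂t(r,s)`, `volterraVariance k 0 t` is `V(t)` and `volterraVariance k t T`
-- is the integral bounded below by `c₁ (T - t)^a`.
noncomputable def volterraVariance (k : ℝ → ℝ → ℝ) (u v : ℝ) : ℝ :=
  ∫ s in u..v, (∫ r in s..v, k r s) ^ 2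

lemma volterraVariance_nonneg (k : ℝ → ℝ → ℝ) {u v : ℝ} (huv : u ≤ v) :
    0 ≤ volterraVariance k u v :=
  intervalIntegral.integral_nonneg huv fun _ _ => sq_nonneg _

lemma volterraVariance_congr {k₁ k₂ : ℝ → ℝ → ℝ} {u v : ℝ} (huv : u ≤ v)
    (h : ∀ r s, u < s → s < r → r < v → k₁ r s = k₂ r s) :
    volterraVariance k₁ u v = volterraVariance k₂ u v :=
  intervalIntegral_congr_Ioo huv fun s hs => by
    rw [intervalIntegral_congr_Ioo hs.2.le fun r hr => h r s hs.1 hr.1 hr.2]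

structure VolterraKernelBound (k : ℝ → ℝ → ℝ) (M α β : ℝ) : Prop where
  measurable : Measurable fun p : ℝ × ℝ => k p.1 p.2
  eq_zero_of_le : ∀ r s, r ≤ s → k r s = 0
  abs_le : ∀ r s, 0 < s → s < r → |k r s| ≤ M * s ^ (-β) * (r - s) ^ (α - 1)

namespace VolterraKernelBound

variable {k : ℝ → ℝ → ℝ} {M α β : ℝ}

lemma measurable_integral (hk : VolterraKernelBound k M α β) (A : Set ℝ) :
    Measurable fun s => ∫ r in A, k r s :=
  (hk.measurable.comp measurable_swap).stronglyMeasurable.integral_prod_right'.measurable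

lemma measurable_integral_abs (hk : VolterraKernelBound k M α β) (A : Set ℝ) :
    Measurable fun s => ∫ r in A, |k r s| :=
  (hk.measurable.abs.comp measurable_swap).stronglyMeasurable.integral_prod_right'.measurable

lemma nonneg (hk : VolterraKernelBound k M α β) : 0 ≤ M := by
  simpa [show (2 : ℝ) - 1 = 1 by norm_num] using
    (abs_nonneg _).trans (hk.abs_le 2 1 one_pos one_lt_two)

lemma integrableOn (hk : VolterraKernelBound k M α β) (hα : 0 < α) {s : ℝ} (hs : 0 < s)
    (u v : ℝ) : IntegrableOn (fun r => k r s) (Ioc u v) := by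
  have hdom : IntegrableOn (fun r => M * s ^ (-β) * (r - s) ^ (α - 1)) (Ioc s v) :=
    ((intervalIntegrable_sub_rpow (by linarith) s s v).const_mul (M * s ^ (-β))).def'.mono_set
      Ioc_subset_uIoc
  have hself : IntegrableOn (fun r => k r s) (Ioc s v) := by
    refine hdom.mono'
      (hk.measurable.comp (measurable_id.prodMk measurable_const)).aestronglyMeasurable
      ((ae_restrict_iff' measurableSet_Ioc).2 (.of_forall fun r hr => ?_))
    exact (Real.norm_eq_abs _).trans_le (hk.abs_le r s hs hr.1)
  refine (hself.of_forall_sdiff_eq_zero (t := Ioc (min u s) v) measurableSet_Ioc fun r hr =>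
    hk.eq_zero_of_le r s (not_lt.1 fun h => hr.2 ⟨h, hr.1.2⟩)).mono_set
    (Ioc_subset_Ioc_left (min_le_left u s))

lemma integral_abs_le (hk : VolterraKernelBound k M α β) (hα : 0 < α) {s u v w : ℝ}
    (hs : 0 < s) (hsw : s ≤ w) (hu : 0 ≤ u) (hvw : v ≤ w) :
    ∫ r in Ioc u v, |k r s| ≤ M / α * w ^ α * s ^ (-β) := by
  have hdom : IntervalIntegrable (fun r => M * s ^ (-β) * (r - s) ^ (α - 1)) volume s w :=
    (intervalIntegrable_sub_rpow (by linarith) s s w).const_mul _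
  calc ∫ r in Ioc u v, |k r s| ≤ ∫ r in Ioc 0 w, |k r s| :=
        setIntegral_mono_set (hk.integrableOn hα hs 0 w).abs
          (.of_forall fun _ => abs_nonneg _) (Ioc_subset_Ioc hu hvw).eventuallyLE
    _ = ∫ r in Ioc s w, |k r s| :=
        setIntegral_Ioc_eq_of_eq_zero hs.le fun r hr => by rw [hk.eq_zero_of_le r s hr, abs_zero]
    _ ≤ ∫ r in Ioc s w, M * s ^ (-β) * (r - s) ^ (α - 1) :=
        setIntegral_mono_on (hk.integrableOn hα hs s w).abs
          ((intervalIntegrable_iff_integrableOn_Ioc_of_le hsw).1 hdom) measurableSet_Ioc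
          fun r hr => hk.abs_le r s hs hr.1
    _ = M * s ^ (-β) * ((w - s) ^ α / α) := by
        rw [← integral_of_le hsw, intervalIntegral.integral_const_mul,
          intervalIntegral.integral_comp_sub_right (fun x => x ^ (α - 1)),
          integral_rpow (Or.inl (by linarith)), sub_self, sub_add_cancel, zero_rpow hα.ne',
          sub_zero]
    _ ≤ M * s ^ (-β) * (w ^ α / α) := by
        gcongr
        · exact mul_nonneg hk.nonneg (rpow_nonneg hs.le _)
        linarith
    _ = M / α * w ^ α * s ^ (-β) := by ring

lemma abs_integral_le (hk : VolterraKernelBound k M α β) (hα : 0 < α) {s u v w : ℝ}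
    (hs : 0 < s) (hsw : s ≤ w) (hu : 0 ≤ u) (hvw : v ≤ w) :
    |∫ r in Ioc u v, k r s| ≤ M / α * w ^ α * s ^ (-β) :=
  MeasureTheory.abs_integral_le_integral_abs.trans (hk.integral_abs_le hα hs hsw hu hvw)

lemma volterraVariance_eq (hk : VolterraKernelBound k M α β) {u v : ℝ} (hu : 0 ≤ u)
    (huv : u ≤ v) : volterraVariance k u v = ∫ s in Ioc u v, (∫ r in Ioc 0 v, k r s) ^ 2 := by
  rw [volterraVariance, integral_of_le huv]
  refine setIntegral_congr_fun measurableSet_Ioc fun s hs => ?_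
  rw [integral_of_le hs.2,
    setIntegral_Ioc_eq_of_eq_zero (hu.trans hs.1.le) fun r hr => hk.eq_zero_of_le r s hr]

lemma integrableOn_integral_mul_integral (hk : VolterraKernelBound k M α β) (hα : 0 < α)
    (hβ : β < 1 / 2) {u₁ v₁ u₂ v₂ w : ℝ} (hu₁ : 0 ≤ u₁) (hv₁ : v₁ ≤ w) (hu₂ : 0 ≤ u₂)
    (hv₂ : v₂ ≤ w) :
    IntegrableOn (fun s => (∫ r in Ioc u₁ v₁, k r s) * ∫ r in Ioc u₂ v₂, k r s) (Ioc 0 w) :=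
  integrableOn_mul_of_abs_le_rpow hβ (hk.measurable_integral _).aestronglyMeasurable
    (hk.measurable_integral _).aestronglyMeasurable
    (fun _ hs => hk.abs_integral_le hα hs.1 hs.2 hu₁ hv₁)
    (fun _ hs => hk.abs_integral_le hα hs.1 hs.2 hu₂ hv₂)

lemma integrable_mul_prod (hk : VolterraKernelBound k M α β) (hα : 0 < α) (hβ : β < 1 / 2)
    {t t' : ℝ} (ht : 0 ≤ t) (htt' : t ≤ t') :
    Integrable (Function.uncurry fun s (p : ℝ × ℝ) => k p.1 s * k p.2 s)
      ((volume.restrict (Ioc 0 t)).prod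
        ((volume.restrict (Ioc 0 t)).prod (volume.restrict (Ioc t t')))) := by
  refine (integrable_prod_iff ?_).2 ⟨?_, ?_⟩
  · exact ((hk.measurable.comp (measurable_snd.fst.prodMk measurable_fst)).mul
      (hk.measurable.comp (measurable_snd.snd.prodMk measurable_fst))).aestronglyMeasurable
  · filter_upwards [ae_restrict_mem measurableSet_Ioc] with s hs
    exact (hk.integrableOn hα hs.1 0 t).mul_prod (hk.integrableOn hα hs.1 t t')
  have hnorm : ∀ s, ∫ p, ‖k p.1 s * k p.2 s‖ ∂(volume.restrict (Ioc 0 t)).prod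
      (volume.restrict (Ioc t t')) = (∫ r in Ioc 0 t, |k r s|) * ∫ r in Ioc t t', |k r s| :=
    fun s => by
      simp only [norm_mul, Real.norm_eq_abs]
      exact integral_prod_mul (fun r => |k r s|) (fun r => |k r s|)
  simp only [Function.uncurry_apply_pair, hnorm]
  refine integrableOn_mul_of_abs_le_rpow hβ (hk.measurable_integral_abs _).aestronglyMeasurable
    (hk.measurable_integral_abs _).aestronglyMeasurable (C := M / α * t' ^ α)
    (fun s hs => ?_) (fun s hs => ?_)
  · rw [abs_of_nonneg (integral_nonneg fun _ => abs_nonneg _)]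
    exact hk.integral_abs_le hα hs.1 (hs.2.trans htt') le_rfl htt'
  · rw [abs_of_nonneg (integral_nonneg fun _ => abs_nonneg _)]
    exact hk.integral_abs_le hα hs.1 (hs.2.trans htt') ht le_rfl

lemma integral_mul_integral_nonneg (hk : VolterraKernelBound k M α β) (hα : 0 < α)
    (hβ : β < 1 / 2) (hpos : ∀ r r', 0 < r → r < r' → 0 ≤ ∫ s in (0 : ℝ)..r, k r s * k r' s)
    {t t' : ℝ} (ht : 0 ≤ t) (htt' : t ≤ t') :
    0 ≤ ∫ s in Ioc 0 t, (∫ r in Ioc 0 t, k r s) * ∫ r in Ioc t t', k r s := by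
  have hprod : ∀ s, (∫ r in Ioc 0 t, k r s) * (∫ r in Ioc t t', k r s)
      = ∫ p, k p.1 s * k p.2 s ∂(volume.restrict (Ioc 0 t)).prod (volume.restrict (Ioc t t')) :=
    fun s => (integral_prod_mul _ _).symm
  simp only [hprod]
  rw [integral_integral_swap (hk.integrable_mul_prod hα hβ ht htt')]
  refine integral_nonneg_of_ae ?_
  rw [Measure.prod_restrict]
  filter_upwards [ae_restrict_mem (measurableSet_Ioc.prod measurableSet_Ioc)] with p ⟨hr, hr'⟩
  rw [setIntegral_eq_of_subset_of_forall_sdiff_eq_zero measurableSet_Ioc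
      (Ioc_subset_Ioc_right hr.2) fun s hs => by
        rw [hk.eq_zero_of_le p.1 s (not_le.1 fun h => hs.2 ⟨hs.1.1, h⟩).le, zero_mul],
    ← integral_of_le hr.1.le]
  exact hpos _ _ hr.1 (hr.2.trans_lt hr'.1)

theorem volterraVariance_add_le (hk : VolterraKernelBound k M α β) (hα : 0 < α)
    (hβ : β < 1 / 2) (hpos : ∀ r r', 0 < r → r < r' → 0 ≤ ∫ s in (0 : ℝ)..r, k r s * k r' s)
    {t t' : ℝ} (ht : 0 ≤ t) (htt' : t ≤ t') :
    volterraVariance k 0 t + volterraVariance k t t' ≤ volterraVariance k 0 t' := by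
  have hsplit : ∀ s ∈ Ioc 0 t, ∫ r in Ioc 0 t', k r s
      = (∫ r in Ioc 0 t, k r s) + ∫ r in Ioc t t', k r s := fun s hs => by
    rw [← Ioc_union_Ioc_eq_Ioc ht htt']
    exact setIntegral_union (Ioc_disjoint_Ioc_of_le le_rfl) measurableSet_Ioc
      (hk.integrableOn hα hs.1 0 t) (hk.integrableOn hα hs.1 t t')
  have hsq (v : ℝ) : IntegrableOn (fun s => (∫ r in Ioc 0 v, k r s) ^ 2) (Ioc 0 v) := by
    simpa only [sq] using
      hk.integrableOn_integral_mul_integral (w := v) hα hβ le_rfl le_rfl le_rfl le_rfl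
  have hcross := (hk.integrableOn_integral_mul_integral hα hβ le_rfl htt' ht le_rfl).mono_set
    (Ioc_subset_Ioc_right htt')
  have hunion : ∫ s in Ioc 0 t', (∫ r in Ioc 0 t', k r s) ^ 2
      = (∫ s in Ioc 0 t, (∫ r in Ioc 0 t', k r s) ^ 2)
        + ∫ s in Ioc t t', (∫ r in Ioc 0 t', k r s) ^ 2 := by
    rw [← setIntegral_union (Ioc_disjoint_Ioc_of_le le_rfl) measurableSet_Ioc
      ((hsq t').mono_set (Ioc_subset_Ioc_right htt')) ((hsq t').mono_set (Ioc_subset_Ioc_left ht)),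
      Ioc_union_Ioc_eq_Ioc ht htt']
  rw [hk.volterraVariance_eq le_rfl ht, hk.volterraVariance_eq ht htt',
    hk.volterraVariance_eq le_rfl (ht.trans htt'), hunion]
  refine add_le_add_left ?_ _
  calc ∫ s in Ioc 0 t, (∫ r in Ioc 0 t, k r s) ^ 2
      ≤ (∫ s in Ioc 0 t, (∫ r in Ioc 0 t, k r s) ^ 2)
        + 2 * ∫ s in Ioc 0 t, (∫ r in Ioc 0 t, k r s) * ∫ r in Ioc t t', k r s :=
        le_add_of_nonneg_right
          (mul_nonneg zero_le_two (hk.integral_mul_integral_nonneg hα hβ hpos ht htt'))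
    _ = ∫ s in Ioc 0 t, ((∫ r in Ioc 0 t, k r s) ^ 2
          + 2 * ((∫ r in Ioc 0 t, k r s) * ∫ r in Ioc t t', k r s)) := by
        rw [integral_add (hsq t) (hcross.const_mul 2), MeasureTheory.integral_const_mul]
    _ ≤ ∫ s in Ioc 0 t, (∫ r in Ioc 0 t', k r s) ^ 2 :=
        setIntegral_mono_on ((hsq t).add (hcross.const_mul 2))
          ((hsq t').mono_set (Ioc_subset_Ioc_right htt')) measurableSet_Ioc fun s hs => by
            rw [hsplit s hs]
            nlinarith [sq_nonneg (∫ r in Ioc t t', k r s)]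

end VolterraKernelBound

-- `σ_r ∂K/∂t(r,s)` cut off outside `0 < s < r < T`, the region where (H1)–(H2) control it;
-- the cut-off kernel is jointly measurable and satisfies the bound everywhere.
noncomputable def truncatedKernel (T : ℝ) (σ : ℝ → ℝ) (K' : ℝ → ℝ → ℝ) (r s : ℝ) : ℝ :=
  σ r * {p : ℝ × ℝ | 0 < p.2 ∧ p.2 < p.1 ∧ p.1 < T}.indicator (fun p => K' p.1 p.2) (r, s)

section truncatedKernel

variable {T : ℝ} {σ : ℝ → ℝ} {K' : ℝ → ℝ → ℝ}

lemma truncatedKernel_of_lt {r s : ℝ} (hs : 0 < s) (hsr : s < r) (hrT : r < T) :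
    truncatedKernel T σ K' r s = σ r * K' r s := by
  rw [truncatedKernel, indicator_of_mem
    (show (r, s) ∈ {p : ℝ × ℝ | 0 < p.2 ∧ p.2 < p.1 ∧ p.1 < T} from ⟨hs, hsr, hrT⟩)]

lemma truncatedKernel_of_not_lt {r s : ℝ} (h : ¬(0 < s ∧ s < r ∧ r < T)) :
    truncatedKernel T σ K' r s = 0 := by
  rw [truncatedKernel, indicator_of_notMem (show (r, s) ∉ _ from h), mul_zero]

lemma volterraKernelBound_truncatedKernel {C c α β : ℝ} (hT : 0 ≤ T) (hσmeas : Measurable σ)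
    (hσ : ∀ t ∈ Icc 0 T, 0 ≤ σ t ∧ σ t ≤ C)
    (hK'cont : ContinuousOn (fun p : ℝ × ℝ => K' p.1 p.2)
      {p : ℝ × ℝ | 0 < p.2 ∧ p.2 < p.1 ∧ p.1 < T})
    (hc : 0 ≤ c) (hβ : 0 ≤ β)
    (hH2 : ∀ s t : ℝ, 0 < s → s < t → t < T → |K' t s| ≤ c * (t - s) ^ (α - 1) * (t / s) ^ β) :
    VolterraKernelBound (truncatedKernel T σ K') (C * c * T ^ β) α β where
  measurable := by
    have hU : IsOpen {p : ℝ × ℝ | 0 < p.2 ∧ p.2 < p.1 ∧ p.1 < T} :=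
      (isOpen_lt continuous_const continuous_snd).inter
        ((isOpen_lt continuous_snd continuous_fst).inter
          (isOpen_lt continuous_fst continuous_const))
    have := ContinuousOn.measurable_piecewise hK'cont continuous_zero.continuousOn hU.measurableSet
    rw [piecewise_eq_indicator] at this
    exact (hσmeas.comp measurable_fst).mul this
  eq_zero_of_le r s h := truncatedKernel_of_not_lt fun h' => h'.2.1.not_ge h
  abs_le r s hs hsr := by
    have hC : 0 ≤ C := (hσ 0 ⟨le_rfl, hT⟩).1.trans (hσ 0 ⟨le_rfl, hT⟩).2
    by_cases hrT : r < T
    · have hσr := hσ r ⟨hs.le.trans hsr.le, hrT.le⟩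
      rw [truncatedKernel_of_lt hs hsr hrT, abs_mul, abs_of_nonneg hσr.1]
      have hrs : (r / s) ^ β ≤ T ^ β * s ^ (-β) := by
        rw [div_rpow (hs.le.trans hsr.le) hs.le, rpow_neg hs.le, div_eq_mul_inv]
        gcongr
        · exact hs.le.trans hsr.le
      calc σ r * |K' r s| ≤ C * (c * (r - s) ^ (α - 1) * (T ^ β * s ^ (-β))) := by
            gcongr
            · exact hσr.2
            · exact (hH2 s r hs hsr hrT).trans (by gcongr)
        _ = C * c * T ^ β * s ^ (-β) * (r - s) ^ (α - 1) := by ring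
    · rw [truncatedKernel_of_not_lt fun h => hrT h.2.2, abs_zero]
      have := rpow_nonneg (sub_pos.2 hsr).le (α - 1)
      have := rpow_nonneg hT β
      have := rpow_nonneg hs.le (-β)
      positivity

lemma truncatedKernel_integral_mul_nonneg (hσ : ∀ t ∈ Icc 0 T, 0 ≤ σ t)
    (hφ : ∀ r s : ℝ, r ≠ s → 0 ≤ ∫ u in (0 : ℝ)..(min r s), K' r u * K' s u)
    (r r' : ℝ) (hr : 0 < r) (hrr' : r < r') :
    0 ≤ ∫ s in (0 : ℝ)..r, truncatedKernel T σ K' r s * truncatedKernel T σ K' r' s := by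
  by_cases hr'T : r' < T
  · rw [intervalIntegral_congr_Ioo (g := fun s => σ r * σ r' * (K' r s * K' r' s)) hr.le
      fun s hs => by
        rw [truncatedKernel_of_lt hs.1 hs.2 (hrr'.trans hr'T),
          truncatedKernel_of_lt hs.1 (hs.2.trans hrr') hr'T, mul_mul_mul_comm],
      intervalIntegral.integral_const_mul]
    refine mul_nonneg (mul_nonneg (hσ r ⟨hr.le, (hrr'.trans hr'T).le⟩)
      (hσ r' ⟨hr.le.trans hrr'.le, hr'T.le⟩)) ?_
    simpa [min_eq_left hrr'.le] using hφ r r' hrr'.ne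
  · have hzero (s : ℝ) : truncatedKernel T σ K' r' s = 0 :=
      truncatedKernel_of_not_lt fun h => hr'T h.2.2
    simp [hzero]

end truncatedKernel

theorem volterra_variance_inverse_sqrt_integrable_general
    (T : ℝ) (hT : 0 < T) (K' : ℝ → ℝ → ℝ)
    (hK'cont : ContinuousOn (fun p : ℝ × ℝ => K' p.1 p.2)
      {p : ℝ × ℝ | 0 < p.2 ∧ p.2 < p.1 ∧ p.1 < T})
    (α β c : ℝ) (hα : 0 < α) (hβ : 0 < β) (hβ' : β < 1 / 2)
    (hc : 0 < c)
    (hH2 : ∀ s t : ℝ, 0 < s → s < t → t < T →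
      |K' t s| ≤ c * (t - s) ^ (α - 1) * (t / s) ^ β)
    (σ : ℝ → ℝ) (hσmeas : Measurable σ)
    (c₀ C : ℝ) (hc₀ : 0 < c₀)
    (hσB : ∀ t ∈ Set.Icc (0 : ℝ) T, c₀ ≤ σ t ∧ σ t ≤ C)
    (hφpos : ∀ r s : ℝ, r ≠ s → 0 ≤ ∫ u in (0 : ℝ)..(min r s), K' r u * K' s u)
    (t₀ : ℝ) (ht₀ : 0 ≤ t₀) (ht₀T : t₀ < T)
    (c₁ a : ℝ) (hc₁ : 0 < c₁) (ha' : a < 2)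
    (hlower : ∀ t ∈ Set.Icc t₀ T,
      c₁ * (T - t) ^ a ≤ ∫ s in t..T, (∫ r in s..T, σ r * K' r s) ^ 2) :
    IntervalIntegrable
      (fun t => ((∫ s in (0 : ℝ)..T, (∫ r in s..T, σ r * K' r s) ^ 2)
          - (∫ s in (0 : ℝ)..t, (∫ r in s..t, σ r * K' r s) ^ 2)) ^ (-(1 : ℝ) / 2))
      MeasureTheory.volume t₀ T := by
  have hσ : ∀ t ∈ Icc 0 T, 0 ≤ σ t ∧ σ t ≤ C := fun t ht =>
    ⟨hc₀.le.trans (hσB t ht).1, (hσB t ht).2⟩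
  have hk := volterraKernelBound_truncatedKernel hT.le hσmeas hσ hK'cont hc.le hβ.le hH2
  have hpos := truncatedKernel_integral_mul_nonneg (fun t ht => (hσ t ht).1) hφpos
  have hV : ∀ u v, 0 ≤ u → u ≤ v → v ≤ T → volterraVariance (fun r s => σ r * K' r s) u v
      = volterraVariance (truncatedKernel T σ K') u v := fun u v hu huv hvT =>
    volterraVariance_congr huv fun r s hs hsr hrv =>
      (truncatedKernel_of_lt (hu.trans_lt hs) hsr (hrv.trans_le hvT)).symm
  have hadd {t t' : ℝ} (ht : 0 ≤ t) (htt' : t ≤ t') :=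
    hk.volterraVariance_add_le hα hβ' hpos ht htt'
  refine intervalIntegrable_rpow_of_antitoneOn (a := a) ht₀T.le hc₁ (by norm_num) (by linarith)
    (D := fun t => volterraVariance (fun r s => σ r * K' r s) 0 T
      - volterraVariance (fun r s => σ r * K' r s) 0 t) (fun x hx y hy hxy => ?_) fun t ht => ?_
  · have hx0 : 0 ≤ x := ht₀.trans hx.1.le
    simp only [hV 0 T le_rfl hT.le le_rfl, hV 0 x le_rfl hx0 (hxy.trans hy.2.le),
      hV 0 y le_rfl (hx0.trans hxy) hy.2.le]
    linarith [hadd hx0 hxy, volterraVariance_nonneg (truncatedKernel T σ K') hxy]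
  · have ht0 : 0 ≤ t := ht₀.trans ht.1.le
    have hlow := hlower t ⟨ht.1.le, ht.2.le⟩
    rw [← volterraVariance, hV t T ht0 ht.2.le le_rfl] at hlow
    simp only [hV 0 T le_rfl hT.le le_rfl, hV 0 t le_rfl ht0 ht.2.le]
    linarith [hadd ht0 ht.2.le]

/-- If moreover `0 < c₀ ≤ σ ≤ C` on `[0,T]`, `φ ≥ 0`, and
`∫_t^T (∫_s^T σ_r K'(r,s) dr)² ds ≥ c₁ (T−t)^a` on `[t₀,T]` for some `c₁ > 0` and
`a ∈ (0,2)`, then `∫_{t₀}^T (V(T) − V(t))^(−1/2) dt < ∞`, where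
`V(t) = ∫_0^t (∫_s^t σ_r K'(r,s) dr)² ds`. -/
theorem volterra_variance_inverse_sqrt_integrable
    (T : ℝ) (hT : 0 < T) (K K' : ℝ → ℝ → ℝ)
    (hVol : ∀ t s : ℝ, t < s → K t s = 0)
    (hKcont : ContinuousOn (fun p : ℝ × ℝ => K p.1 p.2)
      {p : ℝ × ℝ | 0 < p.2 ∧ p.2 ≤ p.1 ∧ p.1 < T})
    (hK' : ∀ s t : ℝ, 0 < s → s < t → t < T → HasDerivAt (fun τ => K τ s) (K' t s) t)
    (hK'cont : ContinuousOn (fun p : ℝ × ℝ => K' p.1 p.2)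
      {p : ℝ × ℝ | 0 < p.2 ∧ p.2 < p.1 ∧ p.1 < T})
    (α β c : ℝ) (hα : 0 < α) (hα' : α < 1 / 2) (hβ : 0 < β) (hβ' : β < 1 / 2)
    (hc : 0 < c)
    (hH2 : ∀ s t : ℝ, 0 < s → s < t → t < T →
      |K' t s| ≤ c * (t - s) ^ (α - 1) * (t / s) ^ β)
    (σ : ℝ → ℝ) (hσmeas : Measurable σ)
    (c₀ C : ℝ) (hc₀ : 0 < c₀) (hc₀C : c₀ ≤ C)
    (hσB : ∀ t ∈ Set.Icc (0 : ℝ) T, c₀ ≤ σ t ∧ σ t ≤ C)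
    (hφpos : ∀ r s : ℝ, r ≠ s → 0 ≤ ∫ u in (0 : ℝ)..(min r s), K' r u * K' s u)
    (t₀ : ℝ) (ht₀ : 0 ≤ t₀) (ht₀T : t₀ < T)
    (c₁ a : ℝ) (hc₁ : 0 < c₁) (ha : 0 < a) (ha' : a < 2)
    (hlower : ∀ t ∈ Set.Icc t₀ T,
      c₁ * (T - t) ^ a ≤ ∫ s in t..T, (∫ r in s..T, σ r * K' r s) ^ 2) :
    IntervalIntegrable
      (fun t => ((∫ s in (0 : ℝ)..T, (∫ r in s..T, σ r * K' r s) ^ 2)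
          - (∫ s in (0 : ℝ)..t, (∫ r in s..t, σ r * K' r s) ^ 2)) ^ (-(1 : ℝ) / 2))
      MeasureTheory.volume t₀ T :=
  volterra_variance_inverse_sqrt_integrable_general T hT K' hK'cont α β c hα hβ hβ' hc hH2 σ hσmeas
    c₀ C hc₀ hσB hφpos t₀ ht₀ ht₀T c₁ a hc₁ ha' hlower
end

section
/- For every t ∈ [0,T], V(t) = ∫_0^t ∫_0^t σ_r σ_{r′} φ(r,r′) dr′ dr, all integrals converging absolutely. -/
/-!
Write `g r s = σ_r ∂K/∂t(r,s)` on `0 < s < r < T` and `0` elsewhere, so that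
`V(t) = ∫_0^t (∫_0^t g(r,s) dr)² ds`. Expanding the square as a double integral and applying
Fubini in `(s, r, r')` gives `∫∫ σ_r σ_r' φ(r,r')`, because `g(r,s) g(r',s)` vanishes unless
`s < min(r,r')`. Fubini applies because (H2) gives `|g(r,s)| ≤ M s^{-β} (r-s)^{α-1}`, hence
`∫_0^t |g(r,s)| dr ≤ C s^{-β}`, which is square integrable as `2β < 1`. The same bound shows that
`r' ↦ σ_r σ_r' φ(r,r')` is integrable for every (not just almost every) `r`, since
`|g(r,s)| ∫_0^t |g(r',s)| dr' ≤ C' (r-s)^{α-1} s^{-2β}` is integrable in `s`.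
-/

open Real MeasureTheory intervalIntegral

open Set Function

section SquareOfIntegral

variable {X S : Type*} [MeasurableSpace X] [MeasurableSpace S] {μ : Measure X} {ν : Measure S}
  [SFinite μ] {g : X → S → ℝ}

theorem integrable_mul_prod_of_integrable_sq_integral_abs (hg : Measurable (uncurry g))
    (hint : ∀ᵐ s ∂ν, Integrable (fun r => g r s) μ)
    (hsq : Integrable (fun s => (∫ r, |g r s| ∂μ) ^ 2) ν) :
    Integrable (fun q : S × X × X => g q.2.1 q.1 * g q.2.2 q.1) (ν.prod (μ.prod μ)) := by
  have hmeas : Measurable (fun q : S × X × X => g q.2.1 q.1 * g q.2.2 q.1) :=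
    (hg.comp (measurable_snd.fst.prodMk measurable_fst)).mul
      (hg.comp (measurable_snd.snd.prodMk measurable_fst))
  refine (integrable_prod_iff hmeas.aestronglyMeasurable).2 ⟨?_, hsq.congr ?_⟩
  · filter_upwards [hint] with s hs using hs.mul_prod hs
  · refine ae_of_all _ fun s => ?_
    simp only [norm_mul, Real.norm_eq_abs]
    rw [integral_prod_mul (fun r => |g r s|) (fun r => |g r s|), sq]

theorem integral_sq_integral_eq_integral_integral [SFinite ν] (hg : Measurable (uncurry g))
    (hint : ∀ᵐ s ∂ν, Integrable (fun r => g r s) μ)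
    (hsq : Integrable (fun s => (∫ r, |g r s| ∂μ) ^ 2) ν) :
    ∫ s, (∫ r, g r s ∂μ) ^ 2 ∂ν = ∫ r, ∫ r', ∫ s, g r s * g r' s ∂ν ∂μ ∂μ := by
  have hprod := integrable_mul_prod_of_integrable_sq_integral_abs hg hint hsq
  calc ∫ s, (∫ r, g r s ∂μ) ^ 2 ∂ν
      = ∫ s, ∫ p, g p.1 s * g p.2 s ∂(μ.prod μ) ∂ν := by
        congr 1 with s
        rw [sq, integral_prod_mul (fun r => g r s) (fun r => g r s)]
    _ = ∫ p, ∫ s, g p.1 s * g p.2 s ∂ν ∂(μ.prod μ) := integral_integral_swap hprod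
    _ = ∫ r, ∫ r', ∫ s, g r s * g r' s ∂ν ∂μ ∂μ := integral_prod _ hprod.integral_prod_right

theorem integrable_integral_integral_mul [SFinite ν] (hg : Measurable (uncurry g))
    (hint : ∀ᵐ s ∂ν, Integrable (fun r => g r s) μ)
    (hsq : Integrable (fun s => (∫ r, |g r s| ∂μ) ^ 2) ν) :
    Integrable (fun r => ∫ r', ∫ s, g r s * g r' s ∂ν ∂μ) μ :=
  (integrable_mul_prod_of_integrable_sq_integral_abs hg hint hsq).integral_prod_right
    |>.integral_prod_left

theorem integrable_integral_mul_of_integrable_abs_mul [SFinite ν] (hg : Measurable (uncurry g))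
    (hint : ∀ᵐ s ∂ν, Integrable (fun r => g r s) μ) {h : S → ℝ} (hh : Measurable h)
    (hbound : Integrable (fun s => |h s| * ∫ r, |g r s| ∂μ) ν) :
    Integrable (fun r => ∫ s, h s * g r s ∂ν) μ := by
  have hmeas : Measurable (fun q : S × X => h q.1 * g q.2 q.1) :=
    (hh.comp measurable_fst).mul (hg.comp measurable_swap)
  refine Integrable.integral_prod_right ((integrable_prod_iff hmeas.aestronglyMeasurable).2
    ⟨?_, hbound.congr (ae_of_all _ fun s => ?_)⟩)
  · filter_upwards [hint] with s hs using hs.const_mul (h s)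
  · simp only [norm_mul, Real.norm_eq_abs, MeasureTheory.integral_const_mul]

theorem integrable_sq_integral_of_integrable_sq_integral_abs (hg : Measurable (uncurry g))
    (hsq : Integrable (fun s => (∫ r, |g r s| ∂μ) ^ 2) ν) :
    Integrable (fun s => (∫ r, g r s ∂μ) ^ 2) ν := by
  refine hsq.mono' ((hg.comp measurable_swap).stronglyMeasurable.integral_prod_right'.pow 2
    |>.aestronglyMeasurable) (ae_of_all _ fun s => ?_)
  rw [norm_pow]
  gcongr
  exact MeasureTheory.norm_integral_le_integral_norm _

end SquareOfIntegral

theorem intervalIntegral_eq_setIntegral_Ioo {f f' : ℝ → ℝ} {a b : ℝ} (hab : a ≤ b)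
    (hf : EqOn f f' (Ioo a b)) : ∫ x in a..b, f x = ∫ x in Ioo a b, f' x := by
  rw [intervalIntegral.integral_of_le hab, integral_Ioc_eq_integral_Ioo]
  exact setIntegral_congr_fun measurableSet_Ioo hf

theorem intervalIntegrable_of_integrableOn_Ioo {f f' : ℝ → ℝ} {a b : ℝ} (hab : a ≤ b)
    (hf' : IntegrableOn f' (Ioo a b)) (hf : EqOn f f' (Ioo a b)) :
    IntervalIntegrable f volume a b :=
  (intervalIntegrable_iff_integrableOn_Ioo_of_le hab).2
    (hf'.congr_fun (fun x hx => (hf hx).symm) measurableSet_Ioo)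

theorem intervalIntegrable_sub_rpow_mul_rpow {m p q : ℝ} (hm : 0 < m) (hp : -1 < p)
    (hq : -1 < q) : IntervalIntegrable (fun u => (m - u) ^ p * u ^ q) volume 0 m := by
  have hleft : IntervalIntegrable (fun u => (m - u) ^ p * u ^ q) volume 0 (m / 2) := by
    refine (intervalIntegrable_rpow' hq).continuousOn_mul (ContinuousOn.rpow_const
      (by fun_prop) fun u hu => Or.inl ?_)
    rw [uIcc_of_le (by linarith)] at hu
    linarith [hu.2]
  have hright : IntervalIntegrable (fun u => (m - u) ^ p * u ^ q) volume (m / 2) m := by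
    have hsub : IntervalIntegrable (fun u => (m - u) ^ p) volume (m / 2) m := by
      simpa [sub_half] using
        ((intervalIntegrable_rpow' hp (a := 0) (b := m / 2)).comp_sub_left m).symm
    refine hsub.mul_continuousOn (ContinuousOn.rpow_const continuousOn_id fun u hu => Or.inl ?_)
    rw [uIcc_of_le (by linarith)] at hu
    exact (show 0 < u by linarith [hu.1]).ne'
  exact hleft.trans hright

theorem integral_Ioo_sub_rpow {s t α : ℝ} (hα : 0 < α) (hst : s ≤ t) :
    ∫ r in Ioo s t, (r - s) ^ (α - 1) = (t - s) ^ α / α := by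
  rw [← integral_Ioc_eq_integral_Ioo, ← intervalIntegral.integral_of_le hst,
    intervalIntegral.integral_comp_sub_right (fun x => x ^ (α - 1)), sub_self,
    integral_rpow (Or.inl (by linarith)), sub_add_cancel, zero_rpow hα.ne', sub_zero]

theorem integrableOn_Ioo_sub_rpow {s t α : ℝ} (hα : 0 < α) (hst : s ≤ t) :
    IntegrableOn (fun r => (r - s) ^ (α - 1)) (Ioo s t) := by
  have h := (intervalIntegrable_rpow' (show -1 < α - 1 by linarith) (a := 0) (b := t - s))
    |>.comp_sub_right s
  rwa [zero_add, sub_add_cancel, intervalIntegrable_iff_integrableOn_Ioo_of_le hst] at h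

structure SingularVolterraBound (g : ℝ → ℝ → ℝ) (M α β t : ℝ) : Prop where
  measurable : Measurable (uncurry g)
  eq_zero_of_le : ∀ r s, r ≤ s → g r s = 0
  abs_le : ∀ r s, 0 < s → s < r → r < t → |g r s| ≤ M * s ^ (-β) * (r - s) ^ (α - 1)

namespace SingularVolterraBound

variable {g : ℝ → ℝ → ℝ} {M α β t : ℝ}

theorem integrableOn (hk : SingularVolterraBound g M α β t) (hα : 0 < α) {s : ℝ} (hs : 0 < s)
    (hst : s < t) : IntegrableOn (fun r => g r s) (Ioo 0 t) := by
  have hzero : IntegrableOn (fun r => g r s) (Ioc 0 s) :=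
    integrableOn_zero.congr_fun (fun r hr => (hk.eq_zero_of_le r s hr.2).symm) measurableSet_Ioc
  have hsing : IntegrableOn (fun r => g r s) (Ioo s t) := by
    refine ((integrableOn_Ioo_sub_rpow hα hst.le).const_mul (M * s ^ (-β))).mono'
      (hk.measurable.comp measurable_prodMk_right).aestronglyMeasurable.restrict ?_
    exact (ae_restrict_iff' measurableSet_Ioo).2
      (ae_of_all _ fun r hr => hk.abs_le r s hs hr.1 hr.2)
  refine (hzero.union hsing).mono_set fun r hr => ?_
  rcases le_or_gt r s with hrs | hrs
  · exact Or.inl ⟨hr.1, hrs⟩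
  · exact Or.inr ⟨hrs, hr.2⟩

theorem integral_abs_le (hk : SingularVolterraBound g M α β t) (hα : 0 < α) (hM : 0 ≤ M)
    {s : ℝ} (hs : 0 < s) (hst : s < t) :
    ∫ r in Ioo 0 t, |g r s| ≤ M * t ^ α / α * s ^ (-β) := by
  have hsub : Ioo s t ⊆ Ioo 0 t := Ioo_subset_Ioo_left hs.le
  calc ∫ r in Ioo 0 t, |g r s| = ∫ r in Ioo s t, |g r s| :=
        setIntegral_eq_of_subset_of_forall_sdiff_eq_zero measurableSet_Ioo hsub fun r hr => by
          rw [hk.eq_zero_of_le r s (not_lt.1 fun h => hr.2 ⟨h, hr.1.2⟩), abs_zero]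
    _ ≤ ∫ r in Ioo s t, M * s ^ (-β) * (r - s) ^ (α - 1) :=
        setIntegral_mono_on ((hk.integrableOn hα hs hst).mono_set hsub).abs
          ((integrableOn_Ioo_sub_rpow hα hst.le).const_mul _) measurableSet_Ioo
          fun r hr => hk.abs_le r s hs hr.1 hr.2
    _ = M * s ^ (-β) * ((t - s) ^ α / α) := by
        rw [MeasureTheory.integral_const_mul, integral_Ioo_sub_rpow hα hst.le]
    _ ≤ M * s ^ (-β) * (t ^ α / α) := by
        gcongr
        linarith
    _ = M * t ^ α / α * s ^ (-β) := by ring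

theorem stronglyMeasurable_integral_abs (hk : SingularVolterraBound g M α β t) :
    StronglyMeasurable fun s => ∫ r in Ioo 0 t, |g r s| :=
  (hk.measurable.comp measurable_swap).abs.stronglyMeasurable.integral_prod_right'

theorem integrableOn_sq_integral_abs (hk : SingularVolterraBound g M α β t) (hα : 0 < α)
    (hM : 0 ≤ M) (hβ : 2 * β < 1) :
    IntegrableOn (fun s => (∫ r in Ioo 0 t, |g r s|) ^ 2) (Ioo 0 t) := by
  have hdom : IntegrableOn (fun s => (M * t ^ α / α) ^ 2 * s ^ (-(2 * β))) (Ioo 0 t) :=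
    ((intervalIntegrable_rpow' (by linarith)).def'.mono_set
      (Ioo_subset_Ioc_self.trans Ioc_subset_uIoc)).const_mul _
  refine hdom.mono' (hk.stronglyMeasurable_integral_abs.pow 2).aestronglyMeasurable ?_
  refine (ae_restrict_iff' measurableSet_Ioo).2 (ae_of_all _ fun s hs => ?_)
  have hnonneg : 0 ≤ ∫ r in Ioo 0 t, |g r s| := integral_nonneg fun r => abs_nonneg _
  calc ‖(∫ r in Ioo 0 t, |g r s|) ^ 2‖ = (∫ r in Ioo 0 t, |g r s|) ^ 2 := by
        rw [Real.norm_eq_abs, abs_of_nonneg (by positivity)]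
    _ ≤ (M * t ^ α / α * s ^ (-β)) ^ 2 := by
        gcongr
        exact hk.integral_abs_le hα hM hs.1 hs.2
    _ = (M * t ^ α / α) ^ 2 * s ^ (-(2 * β)) := by
        rw [mul_pow, ← rpow_mul_natCast hs.1.le]
        ring_nf

theorem integrableOn_abs_mul_integral_abs (hk : SingularVolterraBound g M α β t) (hα : 0 < α)
    (hM : 0 ≤ M) (hβ : 2 * β < 1) {r : ℝ} (hr : 0 < r) (hrt : r < t) :
    IntegrableOn (fun u => |g r u| * ∫ r' in Ioo 0 t, |g r' u|) (Ioo 0 t) := by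
  have hmeas : StronglyMeasurable fun u => |g r u| * ∫ r' in Ioo 0 t, |g r' u| :=
    (hk.measurable.comp measurable_prodMk_left).abs.stronglyMeasurable.mul
      hk.stronglyMeasurable_integral_abs
  have hbeta : IntegrableOn
      (fun u => M * (M * t ^ α / α) * ((r - u) ^ (α - 1) * u ^ (-(2 * β)))) (Ioo 0 r) := by
    refine Integrable.const_mul ?_ _
    rw [← IntegrableOn, ← intervalIntegrable_iff_integrableOn_Ioo_of_le hr.le]
    exact intervalIntegrable_sub_rpow_mul_rpow hr (by linarith) (by linarith)
  have hsing : IntegrableOn (fun u => |g r u| * ∫ r' in Ioo 0 t, |g r' u|) (Ioo 0 r) := by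
    refine hbeta.mono' hmeas.aestronglyMeasurable ?_
    refine (ae_restrict_iff' measurableSet_Ioo).2 (ae_of_all _ fun u hu => ?_)
    have hnonneg : 0 ≤ ∫ r' in Ioo 0 t, |g r' u| := integral_nonneg fun r' => abs_nonneg _
    have hgru := hk.abs_le r u hu.1 hu.2 hrt
    calc ‖|g r u| * ∫ r' in Ioo 0 t, |g r' u|‖ = |g r u| * ∫ r' in Ioo 0 t, |g r' u| := by
          rw [Real.norm_eq_abs, abs_of_nonneg (by positivity)]
      _ ≤ (M * u ^ (-β) * (r - u) ^ (α - 1)) * (M * t ^ α / α * u ^ (-β)) := by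
          gcongr
          · exact (abs_nonneg _).trans hgru
          · exact hk.integral_abs_le hα hM hu.1 (hu.2.trans hrt)
      _ = M * (M * t ^ α / α) * ((r - u) ^ (α - 1) * u ^ (-(2 * β))) := by
          rw [show -(2 * β) = -β + -β by ring, rpow_add hu.1]
          ring
  have hzero : IntegrableOn (fun u => |g r u| * ∫ r' in Ioo 0 t, |g r' u|) (Ico r t) :=
    integrableOn_zero.congr_fun (fun u hu => by rw [hk.eq_zero_of_le r u hu.1, abs_zero, zero_mul])
      measurableSet_Ico
  refine (hsing.union hzero).mono_set fun u hu => ?_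
  rcases lt_or_ge u r with hur | hur
  · exact Or.inl ⟨hu.1, hur⟩
  · exact Or.inr ⟨hur, hu.2⟩

end SingularVolterraBound

section WeightedKernel

variable {T : ℝ} {K' : ℝ → ℝ → ℝ} {σ : ℝ → ℝ}

noncomputable def weightedKernel (T : ℝ) (K' : ℝ → ℝ → ℝ) (σ : ℝ → ℝ) (r s : ℝ) : ℝ :=
  σ r * if 0 < s ∧ s < r ∧ r < T then K' r s else 0

theorem measurable_weightedKernel
    (hK' : ContinuousOn (fun p : ℝ × ℝ => K' p.1 p.2) {p : ℝ × ℝ | 0 < p.2 ∧ p.2 < p.1 ∧ p.1 < T})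
    (hσ : Measurable σ) : Measurable (uncurry (weightedKernel T K' σ)) := by
  have hopen : IsOpen {p : ℝ × ℝ | 0 < p.2 ∧ p.2 < p.1 ∧ p.1 < T} :=
    (isOpen_lt continuous_const continuous_snd).inter
      ((isOpen_lt continuous_snd continuous_fst).inter (isOpen_lt continuous_fst continuous_const))
  exact (hσ.comp measurable_fst).mul
    (hK'.measurable_piecewise (continuousOn_const (c := 0)) hopen.measurableSet)

theorem weightedKernel_of_le {r s : ℝ} (h : r ≤ s) : weightedKernel T K' σ r s = 0 := by
  simp [weightedKernel, h.not_gt]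

theorem weightedKernel_of_lt {r s : ℝ} (hs : 0 < s) (hsr : s < r) (hrT : r < T) :
    weightedKernel T K' σ r s = σ r * K' r s := by
  simp [weightedKernel, hs, hsr, hrT]

theorem abs_weightedKernel_le {c α β Cσ : ℝ} (hc : 0 ≤ c) (hβ : 0 ≤ β)
    (hH2 : ∀ s t : ℝ, 0 < s → s < t → t < T → |K' t s| ≤ c * (t - s) ^ (α - 1) * (t / s) ^ β)
    (hσB : ∀ t ∈ Icc (0 : ℝ) T, |σ t| ≤ Cσ) {r s : ℝ} (hs : 0 < s) (hsr : s < r) (hrT : r < T) :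
    |weightedKernel T K' σ r s| ≤ Cσ * c * T ^ β * s ^ (-β) * (r - s) ^ (α - 1) := by
  have hσr : |σ r| ≤ Cσ := hσB r ⟨by linarith, hrT.le⟩
  have hratio : (r / s) ^ β ≤ T ^ β * s ^ (-β) := by
    rw [div_rpow (by linarith) hs.le, rpow_neg hs.le, div_eq_mul_inv]
    gcongr
    linarith
  have : 0 ≤ (r - s) ^ (α - 1) := rpow_nonneg (by linarith) _
  rw [weightedKernel_of_lt hs hsr hrT, abs_mul]
  calc |σ r| * |K' r s| ≤ Cσ * (c * (r - s) ^ (α - 1) * (r / s) ^ β) :=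
        mul_le_mul hσr (hH2 s r hs hsr hrT) (abs_nonneg _) ((abs_nonneg _).trans hσr)
    _ ≤ Cσ * (c * (r - s) ^ (α - 1) * (T ^ β * s ^ (-β))) := by
        have : 0 ≤ Cσ := (abs_nonneg _).trans hσr
        gcongr
    _ = Cσ * c * T ^ β * s ^ (-β) * (r - s) ^ (α - 1) := by ring

theorem singularVolterraBound_weightedKernel {c α β Cσ t : ℝ}
    (hK' : ContinuousOn (fun p : ℝ × ℝ => K' p.1 p.2) {p : ℝ × ℝ | 0 < p.2 ∧ p.2 < p.1 ∧ p.1 < T})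
    (hσ : Measurable σ) (hc : 0 ≤ c) (hβ : 0 ≤ β)
    (hH2 : ∀ s t : ℝ, 0 < s → s < t → t < T → |K' t s| ≤ c * (t - s) ^ (α - 1) * (t / s) ^ β)
    (hσB : ∀ t ∈ Icc (0 : ℝ) T, |σ t| ≤ Cσ) (htT : t ≤ T) :
    SingularVolterraBound (weightedKernel T K' σ) (Cσ * c * T ^ β) α β t where
  measurable := measurable_weightedKernel hK' hσ
  eq_zero_of_le _ _ := weightedKernel_of_le
  abs_le _ _ hs hsr hrt := abs_weightedKernel_le hc hβ hH2 hσB hs hsr (hrt.trans_le htT)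

theorem intervalIntegral_eq_setIntegral_weightedKernel {t s : ℝ} (htT : t ≤ T) (hs : 0 < s)
    (hst : s < t) : ∫ r in s..t, σ r * K' r s = ∫ r in Ioo 0 t, weightedKernel T K' σ r s := by
  rw [setIntegral_eq_of_subset_of_forall_sdiff_eq_zero measurableSet_Ioo
      (Ioo_subset_Ioo_left hs.le) fun r hr =>
        weightedKernel_of_le (not_lt.1 fun h => hr.2 ⟨h, hr.1.2⟩),
    intervalIntegral.integral_of_le hst.le, integral_Ioc_eq_integral_Ioo]
  exact setIntegral_congr_fun measurableSet_Ioo fun r hr =>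
    (weightedKernel_of_lt hs hr.1 (hr.2.trans_le htT)).symm

theorem mul_intervalIntegral_eq_setIntegral_weightedKernel {t r r' : ℝ} (htT : t ≤ T)
    (hr : r ∈ Ioo 0 t) (hr' : r' ∈ Ioo 0 t) :
    σ r * σ r' * ∫ u in (0 : ℝ)..(min r r'), K' r u * K' r' u =
      ∫ u in Ioo 0 t, weightedKernel T K' σ r u * weightedKernel T K' σ r' u := by
  have hmin : min r r' < t := (min_le_left r r').trans_lt hr.2
  rw [setIntegral_eq_of_subset_of_forall_sdiff_eq_zero measurableSet_Ioo
      (Ioo_subset_Ioo_right hmin.le) fun u hu => ?_,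
    intervalIntegral.integral_of_le (le_min hr.1.le hr'.1.le), integral_Ioc_eq_integral_Ioo,
    ← MeasureTheory.integral_const_mul]
  · refine setIntegral_congr_fun measurableSet_Ioo fun u hu => ?_
    have hur : u < r := hu.2.trans_le (min_le_left r r')
    have hur' : u < r' := hu.2.trans_le (min_le_right r r')
    rw [weightedKernel_of_lt hu.1 hur (hr.2.trans_le htT),
      weightedKernel_of_lt hu.1 hur' (hr'.2.trans_le htT)]
    ring
  · have hmu : min r r' ≤ u := not_lt.1 fun h => hu.2 ⟨hu.1.1, h⟩
    rcases min_le_iff.1 hmu with h | h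
    · rw [weightedKernel_of_le h, zero_mul]
    · rw [weightedKernel_of_le h, mul_zero]

end WeightedKernel

theorem volterra_variance_double_integral_general
    (T : ℝ) (K' : ℝ → ℝ → ℝ)
    (hK'cont : ContinuousOn (fun p : ℝ × ℝ => K' p.1 p.2)
      {p : ℝ × ℝ | 0 < p.2 ∧ p.2 < p.1 ∧ p.1 < T})
    (α β c : ℝ) (hα : 0 < α) (hβ : 0 < β) (hβ' : β < 1 / 2)
    (hc : 0 < c)
    (hH2 : ∀ s t : ℝ, 0 < s → s < t → t < T →
      |K' t s| ≤ c * (t - s) ^ (α - 1) * (t / s) ^ β)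
    (σ : ℝ → ℝ) (hσmeas : Measurable σ)
    (Cσ : ℝ) (hσB : ∀ t ∈ Set.Icc (0 : ℝ) T, |σ t| ≤ Cσ) :
    ∀ t ∈ Set.Icc (0 : ℝ) T,
      (∀ s ∈ Set.Ioo (0 : ℝ) t,
          IntervalIntegrable (fun r => σ r * K' r s) MeasureTheory.volume s t) ∧
      IntervalIntegrable (fun s => (∫ r in s..t, σ r * K' r s) ^ 2)
        MeasureTheory.volume 0 t ∧
      (∀ r ∈ Set.Ioo (0 : ℝ) t,
          IntervalIntegrable
            (fun r' => σ r * σ r' * ∫ u in (0 : ℝ)..(min r r'), K' r u * K' r' u)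
            MeasureTheory.volume 0 t) ∧
      IntervalIntegrable
        (fun r => ∫ r' in (0 : ℝ)..t, σ r * σ r' * ∫ u in (0 : ℝ)..(min r r'), K' r u * K' r' u)
        MeasureTheory.volume 0 t ∧
      (∫ s in (0 : ℝ)..t, (∫ r in s..t, σ r * K' r s) ^ 2)
        = ∫ r in (0 : ℝ)..t, ∫ r' in (0 : ℝ)..t,
            σ r * σ r' * ∫ u in (0 : ℝ)..(min r r'), K' r u * K' r' u := by
  rintro t ⟨ht0, htT⟩
  rcases ht0.eq_or_lt with rfl | ht
  · simp
  set g := weightedKernel T K' σ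
  have hk : SingularVolterraBound g (Cσ * c * T ^ β) α β t :=
    singularVolterraBound_weightedKernel hK'cont hσmeas hc.le hβ.le hH2 hσB htT
  have hM : 0 ≤ Cσ * c * T ^ β := by
    have := (abs_nonneg _).trans (hσB t ⟨ht0, htT⟩)
    have := rpow_nonneg (ht.le.trans htT) β
    positivity
  have h2β : 2 * β < 1 := by linarith
  have hint : ∀ᵐ s ∂volume.restrict (Ioo 0 t), IntegrableOn (fun r => g r s) (Ioo 0 t) :=
    ae_restrict_of_forall_mem measurableSet_Ioo fun s hs => hk.integrableOn hα hs.1 hs.2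
  have hsq := hk.integrableOn_sq_integral_abs hα hM h2β
  have hV : EqOn (fun s => (∫ r in s..t, σ r * K' r s) ^ 2)
      (fun s => (∫ r in Ioo 0 t, g r s) ^ 2) (Ioo 0 t) := fun s hs => by
    simp only [intervalIntegral_eq_setIntegral_weightedKernel htT hs.1 hs.2, g]
  have hΦ : ∀ r ∈ Ioo 0 t, ∫ r' in (0 : ℝ)..t,
      σ r * σ r' * ∫ u in (0 : ℝ)..(min r r'), K' r u * K' r' u =
        ∫ r' in Ioo 0 t, ∫ u in Ioo 0 t, g r u * g r' u := fun r hr =>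
    intervalIntegral_eq_setIntegral_Ioo ht.le fun r' hr' =>
      mul_intervalIntegral_eq_setIntegral_weightedKernel htT hr hr'
  refine ⟨fun s hs => ?_, ?_, fun r hr => ?_, ?_, ?_⟩
  · exact intervalIntegrable_of_integrableOn_Ioo hs.2.le
      ((hk.integrableOn hα hs.1 hs.2).mono_set (Ioo_subset_Ioo_left hs.1.le))
      fun r hr => (weightedKernel_of_lt hs.1 hr.1 (hr.2.trans_le htT)).symm
  · exact intervalIntegrable_of_integrableOn_Ioo ht.le
      (integrable_sq_integral_of_integrable_sq_integral_abs hk.measurable hsq) hV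
  · exact intervalIntegrable_of_integrableOn_Ioo ht.le
      (integrable_integral_mul_of_integrable_abs_mul hk.measurable hint
        (hk.measurable.comp measurable_prodMk_left)
        (hk.integrableOn_abs_mul_integral_abs hα hM h2β hr.1 hr.2))
      fun r' hr' => mul_intervalIntegral_eq_setIntegral_weightedKernel htT hr hr'
  · exact intervalIntegrable_of_integrableOn_Ioo ht.le
      (integrable_integral_integral_mul hk.measurable hint hsq) hΦ
  · rw [intervalIntegral_eq_setIntegral_Ioo ht.le hV, intervalIntegral_eq_setIntegral_Ioo ht.le hΦ]
    exact integral_sq_integral_eq_integral_integral hk.measurable hint hsq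

/-- For every `t ∈ [0,T]`,
`V(t) = ∫_0^t ∫_0^t σ_r σ_{r'} φ(r,r') dr' dr`, all integrals converging absolutely,
where `V(t) = ∫_0^t (∫_s^t σ_r K'(r,s) dr)² ds` and
`φ(r,s) = ∫_0^{min(r,s)} K'(r,u) K'(s,u) du`. -/
theorem volterra_variance_double_integral
    (T : ℝ) (hT : 0 < T) (K K' : ℝ → ℝ → ℝ)
    (hVol : ∀ t s : ℝ, t < s → K t s = 0)
    (hKcont : ContinuousOn (fun p : ℝ × ℝ => K p.1 p.2)
      {p : ℝ × ℝ | 0 < p.2 ∧ p.2 ≤ p.1 ∧ p.1 < T})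
    (hK' : ∀ s t : ℝ, 0 < s → s < t → t < T → HasDerivAt (fun τ => K τ s) (K' t s) t)
    (hK'cont : ContinuousOn (fun p : ℝ × ℝ => K' p.1 p.2)
      {p : ℝ × ℝ | 0 < p.2 ∧ p.2 < p.1 ∧ p.1 < T})
    (α β c : ℝ) (hα : 0 < α) (hα' : α < 1 / 2) (hβ : 0 < β) (hβ' : β < 1 / 2)
    (hc : 0 < c)
    (hH2 : ∀ s t : ℝ, 0 < s → s < t → t < T →
      |K' t s| ≤ c * (t - s) ^ (α - 1) * (t / s) ^ β)
    (σ : ℝ → ℝ) (hσmeas : Measurable σ)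
    (Cσ : ℝ) (hσB : ∀ t ∈ Set.Icc (0 : ℝ) T, |σ t| ≤ Cσ) :
    ∀ t ∈ Set.Icc (0 : ℝ) T,
      (∀ s ∈ Set.Ioo (0 : ℝ) t,
          IntervalIntegrable (fun r => σ r * K' r s) MeasureTheory.volume s t) ∧
      IntervalIntegrable (fun s => (∫ r in s..t, σ r * K' r s) ^ 2)
        MeasureTheory.volume 0 t ∧
      (∀ r ∈ Set.Ioo (0 : ℝ) t,
          IntervalIntegrable
            (fun r' => σ r * σ r' * ∫ u in (0 : ℝ)..(min r r'), K' r u * K' r' u)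
            MeasureTheory.volume 0 t) ∧
      IntervalIntegrable
        (fun r => ∫ r' in (0 : ℝ)..t, σ r * σ r' * ∫ u in (0 : ℝ)..(min r r'), K' r u * K' r' u)
        MeasureTheory.volume 0 t ∧
      (∫ s in (0 : ℝ)..t, (∫ r in s..t, σ r * K' r s) ^ 2)
        = ∫ r in (0 : ℝ)..t, ∫ r' in (0 : ℝ)..t,
            σ r * σ r' * ∫ u in (0 : ℝ)..(min r r'), K' r u * K' r' u :=
  volterra_variance_double_integral_general T K' hK'cont α β c hα hβ hβ' hc hH2 σ hσmeas Cσ hσB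
end
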